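/- arXiv:1403.5835 — 11 statements merged into one kernel-verified Lean document; each statement's English description precedes it below -/
import Mathlib

section
/- Let n < N be positive integers, let A be an n×N complex matrix and A⊥ an (N−n)×N complex matrix such that A·(A⊥)ᵀ = 0 and the N×N matrix obtained by stacking A on top of A⊥ is invertible. Then for any N×N complex matrix B, the matrix A·B·(A⊥)ᵀ has rank at most 1 if and only if there exist an n×n complex matrix D, a vector f ∈ ℂⁿ and a vector g ∈ ℂᴺ such that A·B − Dᵀ·A = f·gᵀ. -/
open Matrix

/-!
Write `A'` for `A⊥`. Inverting the stacked matrix gives `P`, `Q` with `P A + Q A' = 1` and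
`A' Q = 1`. Multiplying the first identity by `A'ᵀ` and using `A A'ᵀ = 0` gives
`A'ᵀ = Q (A' A'ᵀ)`, whence `(A' A'ᵀ)(Qᵀ Q) = A' Q = 1`, so `Q = A'ᵀ (Qᵀ Q)` and
`1 = P A + A'ᵀ X A'` with `X = Qᵀ Q`. Hence `A B - (A B P) A = (A B A'ᵀ) X A'`, which is of
the form `f gᵀ` as soon as `A B A'ᵀ` is. Conversely `(Dᵀ A + f gᵀ) A'ᵀ = f (A' g)ᵀ`.
-/

namespace Matrix

theorem exists_eq_vecMulVec_of_rank_le_one {K m n : Type*} [Field K] [Fintype m] [Fintype n]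
    (M : Matrix m n K) (h : M.rank ≤ 1) : ∃ (f : m → K) (g : n → K), M = vecMulVec f g := by
  rw [rank_eq_finrank_span_cols, Submodule.finrank_le_one_iff_isPrincipal] at h
  obtain ⟨v, hv⟩ := h
  have hcol : ∀ j, ∃ c : K, c • v = M.col j := fun j =>
    Submodule.mem_span_singleton.mp (hv ▸ Submodule.subset_span ⟨j, rfl⟩)
  choose g hg using hcol
  exact ⟨v, g, ext fun i j => by
    simpa [vecMulVec_apply, mul_comm] using (congrFun (hg j) i).symm⟩

variable {R m p ι : Type*} [CommRing R] [Fintype m] [Fintype p] [Fintype ι]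
  [DecidableEq m] [DecidableEq p] [DecidableEq ι]

theorem exists_mul_add_mul_eq_one_of_isUnit_fromRows (e : m ⊕ p ≃ ι)
    {A : Matrix m ι R} {A' : Matrix p ι R}
    (h : IsUnit ((fromRows A A').submatrix e.symm id)) :
    ∃ (P : Matrix ι m R) (Q : Matrix ι p R), P * A + Q * A' = 1 ∧ A' * Q = 1 := by
  obtain ⟨T, hT⟩ := h.exists_left_inv
  set U : Matrix ι (m ⊕ p) R := T.submatrix id e
  have hF : fromRows A A' = ((fromRows A A').submatrix e.symm id).submatrix e id := by
    simp [submatrix_submatrix]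
  have hUF : U * fromRows A A' = 1 := by
    rw [hF, submatrix_mul_equiv, hT, submatrix_id_id]
  have hFU : fromRows A A' * U = 1 := (mul_eq_one_comm_of_equiv e.symm).mp hUF
  rw [← fromCols_toCols U] at hUF hFU
  rw [fromCols_mul_fromRows] at hUF
  rw [fromRows_mul_fromCols, ← fromBlocks_one, fromBlocks_inj] at hFU
  exact ⟨_, _, hUF, hFU.2.2.2⟩

theorem exists_mul_add_transpose_mul_mul_eq_one (e : m ⊕ p ≃ ι)
    {A : Matrix m ι R} {A' : Matrix p ι R} (horth : A * A'ᵀ = 0)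
    (h : IsUnit ((fromRows A A').submatrix e.symm id)) :
    ∃ (P : Matrix ι m R) (X : Matrix p p R), P * A + A'ᵀ * X * A' = 1 := by
  obtain ⟨P, Q, hPQ, hQ⟩ := exists_mul_add_mul_eq_one_of_isUnit_fromRows e h
  have hA'T : A'ᵀ = Q * (A' * A'ᵀ) := by
    calc A'ᵀ = (P * A + Q * A') * A'ᵀ := by rw [hPQ, Matrix.one_mul]
      _ = Q * (A' * A'ᵀ) := by
          rw [Matrix.add_mul, Matrix.mul_assoc, horth, Matrix.mul_zero, zero_add, Matrix.mul_assoc]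
  have hA' : A' * A'ᵀ * Qᵀ = A' := by
    simpa [transpose_mul] using (congrArg transpose hA'T).symm
  have hQ' : Q = A'ᵀ * (Qᵀ * Q) := by
    calc Q = Q * (A' * A'ᵀ * Qᵀ * Q) := by rw [hA', hQ, Matrix.mul_one]
      _ = Q * (A' * A'ᵀ) * (Qᵀ * Q) := by simp only [Matrix.mul_assoc]
      _ = A'ᵀ * (Qᵀ * Q) := by rw [← hA'T]
  exact ⟨P, Qᵀ * Q, by rw [← hQ', hPQ]⟩

end Matrix

theorem stmt0_general (n k : ℕ)
    (A : Matrix (Fin n) (Fin (n + k)) ℂ)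
    (Aperp : Matrix (Fin k) (Fin (n + k)) ℂ)
    (horth : A * Aperpᵀ = 0)
    (hinv : IsUnit ((Matrix.fromRows A Aperp).submatrix finSumFinEquiv.symm id))
    (B : Matrix (Fin (n + k)) (Fin (n + k)) ℂ) :
    (A * B * Aperpᵀ).rank ≤ 1 ↔
      ∃ (D : Matrix (Fin n) (Fin n) ℂ) (f : Fin n → ℂ) (g : Fin (n + k) → ℂ),
        A * B - Dᵀ * A = Matrix.vecMulVec f g := by
  constructor
  · intro hrank
    obtain ⟨P, X, hPX⟩ := exists_mul_add_transpose_mul_mul_eq_one finSumFinEquiv horth hinv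
    obtain ⟨f, h, hfh⟩ := exists_eq_vecMulVec_of_rank_le_one _ hrank
    refine ⟨(A * B * P)ᵀ, f, h ᵥ* X ᵥ* Aperp, ?_⟩
    calc A * B - (A * B * P)ᵀᵀ * A = A * B * (1 - P * A) := by
          rw [transpose_transpose, Matrix.mul_sub, Matrix.mul_one, Matrix.mul_assoc _ P]
      _ = A * B * Aperpᵀ * X * Aperp := by
          rw [← hPX, add_sub_cancel_left]
          simp only [Matrix.mul_assoc]
      _ = vecMulVec f (h ᵥ* X ᵥ* Aperp) := by rw [hfh, vecMulVec_mul, vecMulVec_mul]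
  · rintro ⟨D, f, g, hD⟩
    have hfg : A * B * Aperpᵀ = vecMulVec f (g ᵥ* Aperpᵀ) := by
      rw [← vecMulVec_mul, ← hD, Matrix.sub_mul, Matrix.mul_assoc Dᵀ, horth, Matrix.mul_zero,
        sub_zero]
    exact hfg ▸ rank_vecMulVec_le _ _

/-- For `A` an `n × N` matrix (`N = n + k`), `A⊥` a `k × N` matrix with
`A · (A⊥)ᵀ = 0` and the stacked matrix invertible, and any `N × N` matrix `B`,
`rank (A·B·(A⊥)ᵀ) ≤ 1` iff there exist `D`, `f`, `g` with `A·B − Dᵀ·A = f·gᵀ`. -/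
theorem stmt0 (n k : ℕ) (hn : 0 < n) (hk : 0 < k)
    (A : Matrix (Fin n) (Fin (n + k)) ℂ)
    (Aperp : Matrix (Fin k) (Fin (n + k)) ℂ)
    (horth : A * Aperpᵀ = 0)
    (hinv : IsUnit ((Matrix.fromRows A Aperp).submatrix finSumFinEquiv.symm id))
    (B : Matrix (Fin (n + k)) (Fin (n + k)) ℂ) :
    (A * B * Aperpᵀ).rank ≤ 1 ↔
      ∃ (D : Matrix (Fin n) (Fin n) ℂ) (f : Fin n → ℂ) (g : Fin (n + k) → ℂ),
        A * B - Dᵀ * A = Matrix.vecMulVec f g :=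
  stmt0_general n k A Aperp horth hinv B
end

section
/- Let A, C be n×N complex matrices, B an N×N complex matrix and D̃ an n×n complex matrix with A·B = D̃·A. Then for any K ∈ ℕ and any t₁,…,t_K ∈ ℂ, det(A · exp(∑_{i=1}^K t_i Bⁱ) · Cᵀ) = exp(∑_{i=1}^K t_i · tr(D̃ⁱ)) · det(A·Cᵀ). -/
/-!
Since `A B = D̃ A`, the matrix `A` intertwines `S = ∑ tᵢ Bⁱ` with `S' = ∑ tᵢ D̃ⁱ`, hence also
`exp S` with `exp S'`, so `A exp(S) Cᵀ = exp(S') A Cᵀ` and the claim reduces to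
`det (exp S') = exp (tr S')`. For the latter, `f r = det (exp (r S'))` satisfies
`f (s + u) = f s * f u` and `f' 0 = tr S'` (the derivative of `det` at `1` is the trace), so `f`
solves `f' = tr S' * f` with `f 0 = 1`.
-/

open Matrix NormedSpace

section ExpODE

variable {𝕂 : Type*} [RCLike 𝕂]

theorem hasDerivAt_of_map_add_eq_mul {f : 𝕂 → 𝕂} {c : 𝕂} (hadd : ∀ s u, f (s + u) = f s * f u)
    (hc : HasDerivAt f c 0) (s : 𝕂) : HasDerivAt f (c * f s) s := by
  have hshift : HasDerivAt (fun u => f s * f (u - s)) (f s * c) s :=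
    (HasDerivAt.comp_sub_const (f := f) s s (by rwa [sub_self])).const_mul (f s)
  rw [mul_comm]
  convert hshift using 1
  funext u
  rw [← hadd, add_sub_cancel]

theorem eq_exp_smul_mul_of_hasDerivAt {f : 𝕂 → 𝕂} {c : 𝕂} (hf : ∀ s, HasDerivAt f (c * f s) s)
    (s : 𝕂) : f s = exp (s • c) * f 0 := by
  have hg (s : 𝕂) : HasDerivAt (fun u => exp (u • -c) * f u) 0 s :=
    ((hasDerivAt_exp_smul_const' (-c) s).mul (hf s)).congr_deriv (by ring)
  have hconst := is_const_of_deriv_eq_zero (fun u => (hg u).differentiableAt)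
    (fun u => (hg u).deriv) s 0
  rwa [zero_smul, exp_zero, one_mul, smul_neg, NormedSpace.exp_neg,
    inv_mul_eq_iff_eq_mul₀ (NormedSpace.isUnit_exp _).ne_zero] at hconst

end ExpODE

namespace Matrix

variable {m n 𝕂 : Type*} [Fintype m] [DecidableEq m] [Fintype n] [DecidableEq n] [RCLike 𝕂]

theorem mul_pow_eq_pow_mul {A : Matrix m n 𝕂} {S : Matrix n n 𝕂} {S' : Matrix m m 𝕂}
    (h : A * S = S' * A) (k : ℕ) : A * S ^ k = S' ^ k * A := by
  induction k with
  | zero => simp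
  | succ k ih =>
    rw [pow_succ, pow_succ, ← Matrix.mul_assoc, ih, Matrix.mul_assoc, h, Matrix.mul_assoc]

theorem expSeries_summable' (S : Matrix n n 𝕂) :
    Summable fun k : ℕ => (k.factorial⁻¹ : 𝕂) • S ^ k :=
  open scoped Norms.Operator in NormedSpace.expSeries_summable' S

theorem mul_exp_eq_exp_mul {A : Matrix m n 𝕂} {S : Matrix n n 𝕂} {S' : Matrix m m 𝕂}
    (h : A * S = S' * A) : A * exp S = exp S' * A := by
  have hL := (expSeries_summable' S).hasSum.map (AddMonoidHom.mk' (A * ·) (Matrix.mul_add A))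
    (continuous_const.matrix_mul continuous_id)
  have hR := (expSeries_summable' S').hasSum.map
    (AddMonoidHom.mk' (· * A) fun _ _ => Matrix.add_mul _ _ A)
    (continuous_id.matrix_mul continuous_const)
  rw [exp_eq_tsum 𝕂, exp_eq_tsum 𝕂]
  refine hL.unique ?_
  simpa [Function.comp_def, mul_pow_eq_pow_mul h] using hR

theorem hasDerivAt_det_one_add_smul (M : Matrix m m 𝕂) :
    HasDerivAt (fun r : 𝕂 => det (1 + r • M)) (trace M) 0 := by
  have := (det (1 + (Polynomial.X : Polynomial 𝕂) • M.map Polynomial.C)).hasDerivAt 0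
  rw [derivative_det_one_add_X_smul] at this
  convert this using 2 with r
  simp [eval_det, ← smul_eq_mul_diagonal]

open scoped Norms.Operator in
theorem differentiable_det : Differentiable 𝕂 (det : Matrix m m 𝕂 → 𝕂) := by
  have hentry (i j : m) : Differentiable 𝕂 fun M : Matrix m m 𝕂 => M i j :=
    (LinearMap.toContinuousLinearMap (entryLinearMap 𝕂 𝕂 i j)).differentiable
  simp_rw [funext det_apply]
  fun_prop

open scoped Norms.Operator in
/-- The curves `r ↦ exp (r • M)` and `r ↦ 1 + r • M` pass through `1` with the same velocity,
so their determinants have the same derivative, which for the second one is read off the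
polynomial `det (1 + X • M)`. -/
theorem hasDerivAt_det_exp_smul_zero (M : Matrix m m 𝕂) :
    HasDerivAt (fun r : 𝕂 => det (exp (r • M))) (trace M) 0 := by
  have hdet := (differentiable_det (1 : Matrix m m 𝕂)).hasFDerivAt
  have hexp := hdet.comp_hasDerivAt_of_eq 0 (hasDerivAt_exp_smul_const' M 0) (by simp)
  have hlin := hdet.comp_hasDerivAt_of_eq 0 (((hasDerivAt_id (0 : 𝕂)).smul_const M).const_add 1)
    (by simp)
  rw [zero_smul, exp_zero, Matrix.mul_one] at hexp
  rw [one_smul] at hlin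
  rw [(hasDerivAt_det_one_add_smul M).unique hlin]
  exact hexp

theorem det_exp (M : Matrix m m 𝕂) : det (exp M) = exp (trace M) := by
  have hadd (s u : 𝕂) : det (exp ((s + u) • M)) = det (exp (s • M)) * det (exp (u • M)) := by
    rw [add_smul, exp_add_of_commute _ _ (((Commute.refl M).smul_left s).smul_right u), det_mul]
  have := eq_exp_smul_mul_of_hasDerivAt
    (hasDerivAt_of_map_add_eq_mul hadd (hasDerivAt_det_exp_smul_zero M)) 1
  simpa using this

end Matrix

/-- If `A·B = D̃·A`, then
`det(A · exp(∑ tᵢ Bⁱ) · Cᵀ) = exp(∑ tᵢ tr(D̃ⁱ)) · det(A·Cᵀ)`. -/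
theorem stmt1 (n N : ℕ) (A C : Matrix (Fin n) (Fin N) ℂ)
    (B : Matrix (Fin N) (Fin N) ℂ) (Dt : Matrix (Fin n) (Fin n) ℂ)
    (h : A * B = Dt * A) (K : ℕ) (t : Fin K → ℂ) :
    (A * NormedSpace.exp (∑ i : Fin K, t i • B ^ ((i : ℕ) + 1)) * Cᵀ).det
      = Complex.exp (∑ i : Fin K, t i * (Dt ^ ((i : ℕ) + 1)).trace) * (A * Cᵀ).det := by
  have hsum : A * ∑ i : Fin K, t i • B ^ ((i : ℕ) + 1)
      = (∑ i : Fin K, t i • Dt ^ ((i : ℕ) + 1)) * A := by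
    simp only [Matrix.mul_sum, Matrix.sum_mul, Matrix.mul_smul, Matrix.smul_mul,
      mul_pow_eq_pow_mul h]
  rw [mul_exp_eq_exp_mul hsum, Matrix.mul_assoc, det_mul, det_exp, Complex.exp_eq_exp_ℂ,
    trace_sum]
  simp only [trace_smul, smul_eq_mul]
end

section
/- Let n, k ≥ 1, N = n + k, and let β₁,…,β_N ∈ ℂ be pairwise distinct. Let V_{n,N}(β) be the truncated Vandermonde matrix, B = diag(β₁,…,β_N), and let W be the k×N matrix with entries W_{b,j} = β_j^{k−b} / ∏_{l≠j}(β_j − β_l) for 1 ≤ b ≤ k, 1 ≤ j ≤ N. Then (i) V_{n,N}(β)·Wᵀ = 0, and (ii) V_{n,N}(β)·B·Wᵀ is the n×k matrix whose (1,1) entry is 1 and all other entries are 0. -/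
/-!
Summing `β_j^m / ∏_{l ≠ j} (β_j - β_l)` over `j` gives the coefficient of `X^(N-1)` in the Lagrange
interpolant of `X^m` at the nodes `β`; for `m < N` that interpolant is `X^m` itself, so the sum is
`1` if `m = N - 1` and `0` otherwise. The `(a, b)` entry of `V Wᵀ` is such a sum with
`m = (n-1-a) + (k-1-b) ≤ N - 2`, and the factor `B` raises `m` by one, so that `m = N - 1`
happens exactly at `a = b = 0`.
-/

open Matrix BigOperators

/-- The truncated Vandermonde matrix `V_{n,N}(β)` with entries `β_j^{n−a}` for `1 ≤ a ≤ n`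
(`0`-based: row `a` has entries `β_j^(n−1−a)`). -/
def vdm (n N : ℕ) (β : Fin N → ℂ) : Matrix (Fin n) (Fin N) ℂ :=
  Matrix.of fun a j => β j ^ (n - 1 - (a : ℕ))

open Polynomial Finset in
theorem sum_pow_div_prod_sub {F ι : Type*} [Field F] [Fintype ι] [DecidableEq ι] {v : ι → F}
    (hv : Function.Injective v) {m : ℕ} (hm : m < Fintype.card ι) :
    ∑ i, v i ^ m / ∏ j ∈ univ.erase i, (v i - v j) =
      if m = Fintype.card ι - 1 then 1 else 0 := by
  have hdeg : (X ^ m : F[X]).degree < #(univ : Finset ι) := by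
    rw [degree_X_pow, card_univ]; exact_mod_cast hm
  simpa [coeff_X_pow, eq_comm] using (Lagrange.coeff_eq_sum hv.injOn hdeg).symm

open Finset in
theorem sum_pow_mul_pow_div_prod_sub {F ι : Type*} [Field F] [Fintype ι] [DecidableEq ι]
    {v : ι → F} (hv : Function.Injective v) {p q : ℕ} (hpq : p + q < Fintype.card ι) :
    ∑ i, v i ^ p * (v i ^ q / ∏ j ∈ univ.erase i, (v i - v j)) =
      if p + q = Fintype.card ι - 1 then 1 else 0 := by
  simp_rw [← mul_div_assoc, ← pow_add]
  exact sum_pow_div_prod_sub hv hpq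

theorem stmt5_general (n k : ℕ) (β : Fin (n + k) → ℂ)
    (hβ : Function.Injective β)
    (W : Matrix (Fin k) (Fin (n + k)) ℂ)
    (hW : W = Matrix.of fun (b : Fin k) (j : Fin (n + k)) =>
      β j ^ (k - 1 - (b : ℕ)) / ∏ l ∈ Finset.univ.erase j, (β j - β l)) :
    vdm n (n + k) β * Wᵀ = 0 ∧
      vdm n (n + k) β * Matrix.diagonal β * Wᵀ
        = Matrix.of (fun (a : Fin n) (b : Fin k) =>
            if (a : ℕ) = 0 ∧ (b : ℕ) = 0 then (1 : ℂ) else 0) := by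
  subst hW
  constructor
  · ext a b
    simp only [mul_apply, transpose_apply, vdm, of_apply, Matrix.zero_apply]
    rw [sum_pow_mul_pow_div_prod_sub hβ (by rw [Fintype.card_fin]; omega), if_neg (by rw [Fintype.card_fin]; omega)]
  · ext a b
    rw [mul_apply]
    simp only [mul_diagonal, transpose_apply, vdm, of_apply, ← pow_succ]
    rw [sum_pow_mul_pow_div_prod_sub hβ (by rw [Fintype.card_fin]; omega)]
    exact if_congr (by rw [Fintype.card_fin]; omega) rfl rfl

/-- For `N = n + k` and pairwise distinct `β`, with
`W_{b,j} = β_j^{k−b} / ∏_{l≠j}(β_j − β_l)`: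
(i) `V_{n,N}(β)·Wᵀ = 0`, and (ii) `V_{n,N}(β)·diag(β)·Wᵀ` has `(1,1)` entry `1` and all
other entries `0`. -/
theorem stmt5 (n k : ℕ) (hn : 0 < n) (hk : 0 < k) (β : Fin (n + k) → ℂ)
    (hβ : Function.Injective β)
    (W : Matrix (Fin k) (Fin (n + k)) ℂ)
    (hW : W = Matrix.of fun (b : Fin k) (j : Fin (n + k)) =>
      β j ^ (k - 1 - (b : ℕ)) / ∏ l ∈ Finset.univ.erase j, (β j - β l)) :
    vdm n (n + k) β * Wᵀ = 0 ∧
      vdm n (n + k) β * Matrix.diagonal β * Wᵀ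
        = Matrix.of (fun (a : Fin n) (b : Fin k) =>
            if (a : ℕ) = 0 ∧ (b : ℕ) = 0 then (1 : ℂ) else 0) :=
  stmt5_general n k β hβ W hW
end

section
/- Let n, k ≥ 1, N = n + k, and let β₁,…,β_N, δ₁,…,δ_N ∈ ℂ be 2N pairwise distinct complex numbers. Set r(z) = ∏_{i=1}^N (z − δ_i) and p'(β_j) = ∏_{l≠j}(β_j − β_l). Let A⁰ be the n×N matrix with entries A⁰_{i,j} = 1/(β_j − δ_i) for 1 ≤ i ≤ n, let B = diag(β₁,…,β_N), and let W be the k×N matrix with entries W_{b,j} = r(β_j) / ((β_j − δ_{n+b}) · p'(β_j)) for 1 ≤ b ≤ k. Then (i) A⁰·Wᵀ = 0, and (ii) A⁰·B·Wᵀ is the n×k all-ones matrix. -/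
/-!
Removing the factors `z - δ_i` and `z - δ_{n+b}` from `r` leaves a monic polynomial `q` of
degree `N - 2`. For a polynomial `P` of degree `< N`, Lagrange interpolation at the nodes `β_j`
gives `∑_j P(β_j) / p'(β_j) = coeff_{N-1} P`. Applied to `P = q` and `P = z q`, this makes the
`(i, b)` entry of `A⁰ Wᵀ` equal to `0` and that of `A⁰ B Wᵀ` equal to `1`.
-/

open Matrix Polynomial Lagrange Finset

section

variable {F ι : Type*} [Field F] [Fintype ι] [DecidableEq ι]

lemma one_div_sub_mul_prod_sub_div_eq_eval_nodal_div (δ : ι → F) {a b : ι} (hab : a ≠ b)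
    {x : F} (ha : x ≠ δ a) (hb : x ≠ δ b) (p : F) :
    1 / (x - δ a) * ((∏ m, (x - δ m)) / ((x - δ b) * p))
      = (nodal ((univ.erase a).erase b) δ).eval x / p := by
  have hb' : b ∈ univ.erase a := mem_erase.mpr ⟨hab.symm, mem_univ b⟩
  rw [eval_nodal, ← mul_prod_erase _ _ (mem_univ a), ← mul_prod_erase _ _ hb']
  field_simp [sub_ne_zero.mpr ha, sub_ne_zero.mpr hb]

lemma natDegree_nodal_erase_erase_add_two (δ : ι → F) {a b : ι} (hab : a ≠ b) :
    (nodal ((univ.erase a).erase b) δ).natDegree + 2 = Fintype.card ι := by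
  rw [natDegree_nodal, card_erase_of_mem (mem_erase.mpr ⟨hab.symm, mem_univ b⟩),
    card_erase_of_mem (mem_univ a), card_univ]
  have : 2 ≤ Fintype.card ι := Fintype.one_lt_card_iff.mpr ⟨a, b, hab⟩
  omega

variable {β : ι → F} (hβ : Function.Injective β)
include hβ

lemma sum_eval_div_prod_sub_eq_zero {P : F[X]} (hP : P.natDegree + 1 < Fintype.card ι) :
    ∑ j, P.eval (β j) / ∏ l ∈ univ.erase j, (β j - β l) = 0 := by
  have hlt : P.degree < #(univ : Finset ι) := degree_le_natDegree.trans_lt <| by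
    rw [card_univ]; exact_mod_cast (by omega : P.natDegree < Fintype.card ι)
  rw [← coeff_eq_sum hβ.injOn hlt, card_univ]
  exact coeff_eq_zero_of_natDegree_lt (by omega)

lemma sum_eval_div_prod_sub_eq_one {P : F[X]} (hP : P.Monic)
    (hdeg : P.natDegree + 1 = Fintype.card ι) :
    ∑ j, P.eval (β j) / ∏ l ∈ univ.erase j, (β j - β l) = 1 := by
  rw [← leadingCoeff_eq_sum hβ.injOn, hP.leadingCoeff]
  rw [card_univ, degree_eq_natDegree hP.ne_zero, ← hdeg]
  norm_cast

end

theorem stmt7_general (n k : ℕ)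
    (β δ : Fin (n + k) → ℂ)
    (hdist : Function.Injective (Sum.elim β δ : Fin (n + k) ⊕ Fin (n + k) → ℂ))
    (A0 : Matrix (Fin n) (Fin (n + k)) ℂ)
    (hA0 : A0 = Matrix.of fun (i : Fin n) (j : Fin (n + k)) =>
      1 / (β j - δ (Fin.castAdd k i)))
    (W : Matrix (Fin k) (Fin (n + k)) ℂ)
    (hW : W = Matrix.of fun (b : Fin k) (j : Fin (n + k)) =>
      (∏ i, (β j - δ i)) /
        ((β j - δ (Fin.natAdd n b)) * ∏ l ∈ Finset.univ.erase j, (β j - β l))) :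
    A0 * Wᵀ = 0 ∧
      A0 * Matrix.diagonal β * Wᵀ
        = Matrix.of fun (_ : Fin n) (_ : Fin k) => (1 : ℂ) := by
  have hβ : Function.Injective β := hdist.comp Sum.inl_injective
  have hβδ (j m) : β j ≠ δ m := fun h => Sum.inl_ne_inr (hdist h)
  have hab (i : Fin n) (b : Fin k) : Fin.castAdd k i ≠ Fin.natAdd n b := by
    rw [Ne, Fin.ext_iff, Fin.val_castAdd, Fin.val_natAdd]
    omega
  have hterm (i b j) := one_div_sub_mul_prod_sub_div_eq_eval_nodal_div δ (hab i b)
    (hβδ j _) (hβδ j _) (∏ l ∈ univ.erase j, (β j - β l))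
  subst hA0 hW
  constructor
  · ext i b
    simp only [mul_apply, transpose_apply, of_apply, Matrix.zero_apply, hterm]
    have := natDegree_nodal_erase_erase_add_two δ (hab i b)
    exact sum_eval_div_prod_sub_eq_zero hβ (by omega)
  · ext i b
    rw [mul_apply]
    simp only [mul_diagonal, transpose_apply, of_apply, mul_right_comm _ (β _), hterm]
    have := natDegree_nodal_erase_erase_add_two δ (hab i b)
    refine (sum_congr rfl fun j _ => ?_).trans
      (sum_eval_div_prod_sub_eq_one hβ (monic_X.mul nodal_monic)
        (by rw [natDegree_X_mul nodal_ne_zero]; omega))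
    rw [eval_mul, eval_X]
    ring

/-- For `N = n + k` and `2N` pairwise distinct numbers
`β₁,…,β_N, δ₁,…,δ_N`, with `A⁰_{i,j} = 1/(β_j − δ_i)` (`1 ≤ i ≤ n`), `B = diag(β)` and
`W_{b,j} = r(β_j)/((β_j − δ_{n+b})·p'(β_j))` where `r(z) = ∏ᵢ(z − δᵢ)` and
`p'(β_j) = ∏_{l≠j}(β_j − β_l)`: (i) `A⁰·Wᵀ = 0`, (ii) `A⁰·B·Wᵀ` is the all-ones matrix. -/
theorem stmt7 (n k : ℕ) (hn : 0 < n) (hk : 0 < k)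
    (β δ : Fin (n + k) → ℂ)
    (hdist : Function.Injective (Sum.elim β δ : Fin (n + k) ⊕ Fin (n + k) → ℂ))
    (A0 : Matrix (Fin n) (Fin (n + k)) ℂ)
    (hA0 : A0 = Matrix.of fun (i : Fin n) (j : Fin (n + k)) =>
      1 / (β j - δ (Fin.castAdd k i)))
    (W : Matrix (Fin k) (Fin (n + k)) ℂ)
    (hW : W = Matrix.of fun (b : Fin k) (j : Fin (n + k)) =>
      (∏ i, (β j - δ i)) /
        ((β j - δ (Fin.natAdd n b)) * ∏ l ∈ Finset.univ.erase j, (β j - β l))) :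
    A0 * Wᵀ = 0 ∧
      A0 * Matrix.diagonal β * Wᵀ
        = Matrix.of fun (_ : Fin n) (_ : Fin k) => (1 : ℂ) :=
  stmt7_general n k β δ hdist A0 hA0 W hW
end

section
/- Let n ≤ N, let δ₁,…,δ_n ∈ ℂ be pairwise distinct and β₁,…,β_N ∈ ℂ satisfy β_j ≠ δ_b for all b, j. Set r(z) = ∏_{b=1}^n (z − δ_b) and r'(δ_b) = ∏_{c≠b}(δ_b − δ_c). Let K be the n×n matrix with entries K_{a,b} = δ_b^{n−a} / r'(δ_b), let A⁰ be the n×N Cauchy matrix with entries A⁰_{b,j} = 1/(β_j − δ_b), and let R = diag(r(β₁),…,r(β_N)). Then K·A⁰·R = V_{n,N}(β). -/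
/-!
The entry `(a, j)` of `K·A⁰·R` is `r(β_j) ∑_b δ_b^{n-a} / (r'(δ_b) (β_j - δ_b))`, which is the
first barycentric form of the Lagrange interpolant of `z ↦ z^{n-a}` at the nodes `δ`, evaluated
at `β_j`. Since `n - a < n`, the interpolant is `z^{n-a}` itself.
-/

open Matrix BigOperators

open Polynomial Lagrange

section Barycentric

variable {F ι : Type*} [Field F] [Fintype ι] [DecidableEq ι]

theorem eval_eq_prod_mul_sum_nodalWeight {δ : ι → F} (hδ : Function.Injective δ)
    {p : F[X]} (hp : p.degree < Fintype.card ι) {x : F} (hx : ∀ b, x ≠ δ b) :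
    p.eval x = (∏ c, (x - δ c)) *
      ∑ b, nodalWeight Finset.univ δ b * (x - δ b)⁻¹ * p.eval (δ b) := by
  conv_lhs => rw [eq_interpolate hδ.injOn hp]
  rw [eval_interpolate_not_at_node _ fun b _ => hx b, eval_nodal]

theorem pow_eq_prod_mul_sum_div_prod_sub {δ : ι → F} (hδ : Function.Injective δ)
    {m : ℕ} (hm : m < Fintype.card ι) {x : F} (hx : ∀ b, x ≠ δ b) :
    x ^ m = (∑ b, δ b ^ m / (∏ c ∈ Finset.univ.erase b, (δ b - δ c)) * (1 / (x - δ b))) *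
      ∏ c, (x - δ c) := by
  have hdeg : (X ^ m : F[X]).degree < Fintype.card ι := by
    rw [degree_X_pow]
    exact_mod_cast hm
  simpa [nodalWeight, Finset.prod_inv_distrib, div_eq_mul_inv, mul_comm, mul_left_comm]
    using eval_eq_prod_mul_sum_nodalWeight hδ hdeg hx

end Barycentric

theorem cauchy_mul_diagonal_eq_pow {F ι κ ρ : Type*} [Field F] [Fintype ι] [DecidableEq ι]
    [Fintype κ] [DecidableEq κ] {δ : ι → F} (hδ : Function.Injective δ) {β : κ → F}
    (hβδ : ∀ b j, β j ≠ δ b) {e : ρ → ℕ} (he : ∀ a, e a < Fintype.card ι) :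
    (of fun a b => δ b ^ e a / ∏ c ∈ Finset.univ.erase b, (δ b - δ c)) *
        (of fun b j => 1 / (β j - δ b)) * diagonal (fun j => ∏ b, (β j - δ b)) =
      of fun a j => β j ^ e a := by
  ext a j
  rw [mul_diagonal, mul_apply, of_apply,
    pow_eq_prod_mul_sum_div_prod_sub hδ (he a) fun b => hβδ b j]
  simp only [of_apply]

theorem stmt8_general (n N : ℕ)
    (δ : Fin n → ℂ) (hδ : Function.Injective δ)
    (β : Fin N → ℂ) (hβδ : ∀ b j, β j ≠ δ b)
    (K : Matrix (Fin n) (Fin n) ℂ)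
    (hK : K = Matrix.of fun (a b : Fin n) =>
      δ b ^ (n - 1 - (a : ℕ)) / ∏ c ∈ Finset.univ.erase b, (δ b - δ c))
    (A0 : Matrix (Fin n) (Fin N) ℂ)
    (hA0 : A0 = Matrix.of fun (b : Fin n) (j : Fin N) => 1 / (β j - δ b)) :
    K * A0 * Matrix.diagonal (fun j => ∏ b, (β j - δ b)) = vdm n N β := by
  subst hK hA0
  exact cauchy_mul_diagonal_eq_pow hδ hβδ fun a => by
    rw [Fintype.card_fin]
    omega

/-- With `K_{a,b} = δ_b^{n−a}/r'(δ_b)`, `A⁰_{b,j} = 1/(β_j − δ_b)` and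
`R = diag(r(β₁),…,r(β_N))` where `r(z) = ∏_b (z − δ_b)` and
`r'(δ_b) = ∏_{c≠b}(δ_b − δ_c)`, one has `K·A⁰·R = V_{n,N}(β)`. -/
theorem stmt8 (n N : ℕ) (hn : 0 < n) (hnN : n ≤ N)
    (δ : Fin n → ℂ) (hδ : Function.Injective δ)
    (β : Fin N → ℂ) (hβδ : ∀ b j, β j ≠ δ b)
    (K : Matrix (Fin n) (Fin n) ℂ)
    (hK : K = Matrix.of fun (a b : Fin n) =>
      δ b ^ (n - 1 - (a : ℕ)) / ∏ c ∈ Finset.univ.erase b, (δ b - δ c))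
    (A0 : Matrix (Fin n) (Fin N) ℂ)
    (hA0 : A0 = Matrix.of fun (b : Fin n) (j : Fin N) => 1 / (β j - δ b)) :
    K * A0 * Matrix.diagonal (fun j => ∏ b, (β j - δ b)) = vdm n N β :=
  stmt8_general n N δ hδ β hβδ K hK A0 hA0
end

section
/- Let p, q ≥ 1, let β, δ ∈ ℂ with β ≠ δ, and let 𝒜 be the p×q complex matrix with entries 𝒜_{μ,ν} = C(μ+ν−2, ν−1) · (−1)^{ν+1} / (β−δ)^{μ+ν−1} for 1 ≤ μ ≤ p, 1 ≤ ν ≤ q, where C(·,·) is the binomial coefficient. Let J_q(β) = β·I_q + Λ_q and J_p(δ) = δ·I_p + Λ_p be Jordan blocks. Then 𝒜·J_q(β) − J_p(δ)ᵀ·𝒜 is the p×q matrix whose (1,1) entry is 1 and all other entries are 0. -/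
/-! With indices from `0`, `Λ_q` shifts the columns of `𝒜` one step right and `Λ_pᵀ` shifts its
rows one step down, so the `(μ, ν)` entry of `𝒜 J_q(β) − J_p(δ)ᵀ 𝒜` is
`(β − δ) a μ ν + a μ (ν − 1) − a (μ − 1) ν`, a term with index `−1` being absent. For
`a μ ν = C(μ + ν, ν) (−1)^ν / (β − δ)^(μ + ν + 1)` this vanishes off the corner by Pascal's rule
and is `1` at `(0, 0)`. -/

open Matrix BigOperators

/-- The `n × n` upper-triangular shift matrix `Λ_n`. -/
def shiftMat (n : ℕ) : Matrix (Fin n) (Fin n) ℂ :=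
  Matrix.of fun a b => if (b : ℕ) = (a : ℕ) + 1 then 1 else 0

lemma Fin.sum_ite_val_eq_succ {M : Type*} [AddCommMonoid M] {n : ℕ} (j : Fin n) (g : ℕ → M) :
    (∑ k : Fin n, if (j : ℕ) = k + 1 then g k else 0) = if (j : ℕ) = 0 then 0 else g (j - 1) := by
  rw [Fin.sum_univ_eq_sum_range (fun k => if (j : ℕ) = k + 1 then g k else 0)]
  split_ifs with hj
  · exact Finset.sum_eq_zero fun k _ => if_neg (by omega)
  · rw [Finset.sum_eq_single ((j : ℕ) - 1) (fun k _ hk => if_neg (by omega)) (by simp; omega),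
      if_pos (by omega)]

lemma of_mul_shiftMat_apply {m n : ℕ} (f : ℕ → ℕ → ℂ) (i : Fin m) (j : Fin n) :
    ((of fun (k : Fin m) (l : Fin n) => f k l) * shiftMat n) i j =
      if (j : ℕ) = 0 then 0 else f i (j - 1) := by
  simp only [mul_apply, of_apply, shiftMat, mul_ite, mul_one, mul_zero]
  exact Fin.sum_ite_val_eq_succ j (f i)

lemma shiftMat_transpose_mul_of_apply {m n : ℕ} (f : ℕ → ℕ → ℂ) (i : Fin m) (j : Fin n) :
    ((shiftMat m)ᵀ * of fun (k : Fin m) (l : Fin n) => f k l) i j =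
      if (i : ℕ) = 0 then 0 else f (i - 1) j := by
  simp only [mul_apply, of_apply, transpose_apply, shiftMat, ite_mul, one_mul, zero_mul]
  exact Fin.sum_ite_val_eq_succ i (f · j)

lemma mul_add_smul_one_sub_transpose_mul {R m n : Type*} [CommRing R] [Fintype m] [Fintype n]
    [DecidableEq m] [DecidableEq n] (A : Matrix m n R) (N : Matrix n n R) (N' : Matrix m m R)
    (β δ : R) :
    A * (β • 1 + N) - (δ • 1 + N')ᵀ * A = (β - δ) • A + (A * N - N'ᵀ * A) := by
  simp only [Matrix.mul_add, Matrix.add_mul, transpose_add, transpose_smul, transpose_one,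
    Matrix.mul_smul, Matrix.smul_mul, Matrix.mul_one, Matrix.one_mul, sub_smul]
  abel

def sylvesterCoeff {K : Type*} [Field K] (c : K) (μ ν : ℕ) : K :=
  ((μ + ν).choose ν : K) * (-1) ^ ν / c ^ (μ + ν + 1)

lemma sylvesterCoeff_recurrence {K : Type*} [Field K] {c : K} (hc : c ≠ 0) (μ ν : ℕ) :
    c * sylvesterCoeff c μ ν + (if ν = 0 then 0 else sylvesterCoeff c μ (ν - 1))
      - (if μ = 0 then 0 else sylvesterCoeff c (μ - 1) ν) = if μ = 0 ∧ ν = 0 then 1 else 0 := by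
  unfold sylvesterCoeff
  rcases μ with _ | m <;> rcases ν with _ | n <;> simp only [if_true, if_false, and_true,
    and_false, Nat.add_one_ne_zero, Nat.add_sub_cancel]
  · field_simp; simp
  · rw [zero_add, zero_add, Nat.choose_self, Nat.choose_self]
    field_simp
    ring
  · rw [add_zero, add_zero, Nat.choose_zero_right, Nat.choose_zero_right]
    field_simp
    ring
  · have pascal : (m + 1 + (n + 1)).choose (n + 1)
        = (m + 1 + n).choose n + (m + (n + 1)).choose (n + 1) := by
      rw [show m + 1 + (n + 1) = (m + n + 1) + 1 by ring, Nat.choose_succ_succ]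
      congr 2; ring
    rw [pascal]
    push_cast
    field_simp
    ring

theorem stmt9_general (p q : ℕ) (β δ : ℂ) (hβδ : β ≠ δ)
    (A : Matrix (Fin p) (Fin q) ℂ)
    (hA : A = Matrix.of fun (μ : Fin p) (ν : Fin q) =>
      (Nat.choose ((μ : ℕ) + (ν : ℕ)) (ν : ℕ) : ℂ) * (-1) ^ (ν : ℕ)
        / (β - δ) ^ ((μ : ℕ) + (ν : ℕ) + 1)) :
    A * (β • (1 : Matrix (Fin q) (Fin q) ℂ) + shiftMat q)
      - (δ • (1 : Matrix (Fin p) (Fin p) ℂ) + shiftMat p)ᵀ * A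
      = Matrix.of fun (μ : Fin p) (ν : Fin q) =>
          if (μ : ℕ) = 0 ∧ (ν : ℕ) = 0 then (1 : ℂ) else 0 := by
  replace hA : A = of fun (μ : Fin p) (ν : Fin q) => sylvesterCoeff (β - δ) μ ν := hA
  subst hA
  ext μ ν
  rw [mul_add_smul_one_sub_transpose_mul, Matrix.add_apply, Matrix.sub_apply, Matrix.smul_apply,
    of_mul_shiftMat_apply (sylvesterCoeff (β - δ)),
    shiftMat_transpose_mul_of_apply (sylvesterCoeff (β - δ)), of_apply, smul_eq_mul,
    ← add_sub_assoc]
  exact sylvesterCoeff_recurrence (sub_ne_zero.mpr hβδ) μ ν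

/-- For `𝒜_{μ,ν} = C(μ+ν−2, ν−1)·(−1)^{ν+1}/(β−δ)^{μ+ν−1}` (`1`-based;
`0`-based: `𝒜_{μ,ν} = C(μ+ν, ν)·(−1)^ν/(β−δ)^{μ+ν+1}`) and Jordan blocks
`J_q(β) = β·I_q + Λ_q`, `J_p(δ) = δ·I_p + Λ_p`, the matrix `𝒜·J_q(β) − J_p(δ)ᵀ·𝒜`
has `(1,1)` entry `1` and all others `0`. -/
theorem stmt9 (p q : ℕ) (hp : 0 < p) (hq : 0 < q) (β δ : ℂ) (hβδ : β ≠ δ)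
    (A : Matrix (Fin p) (Fin q) ℂ)
    (hA : A = Matrix.of fun (μ : Fin p) (ν : Fin q) =>
      (Nat.choose ((μ : ℕ) + (ν : ℕ)) (ν : ℕ) : ℂ) * (-1) ^ (ν : ℕ)
        / (β - δ) ^ ((μ : ℕ) + (ν : ℕ) + 1)) :
    A * (β • (1 : Matrix (Fin q) (Fin q) ℂ) + shiftMat q)
      - (δ • (1 : Matrix (Fin p) (Fin p) ℂ) + shiftMat p)ᵀ * A
      = Matrix.of fun (μ : Fin p) (ν : Fin q) =>
          if (μ : ℕ) = 0 ∧ (ν : ℕ) = 0 then (1 : ℂ) else 0 :=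
  stmt9_general p q β δ hβδ A hA
end

section
/- Let m, M ≥ 1, let n₁,…,n_m ≥ 1 and N₁,…,N_M ≥ 1 be block sizes, and let δ₁,…,δ_m, β₁,…,β_M ∈ ℂ satisfy β_j ≠ δ_i for all i, j. Index rows by pairs (i,μ) with 1 ≤ i ≤ m, 1 ≤ μ ≤ n_i and columns by pairs (j,ν) with 1 ≤ j ≤ M, 1 ≤ ν ≤ N_j. Let D be the block-diagonal Jordan matrix with blocks J_{n_i}(δ_i) and B the block-diagonal Jordan matrix with blocks J_{N_j}(β_j). Let A⁰ be the matrix with entries A⁰_{(i,μ),(j,ν)} = C(μ+ν−2, ν−1)·(−1)^{ν+1}/(β_j−δ_i)^{μ+ν−1}, and let f, g be the vectors with entries f_{(i,μ)} = δ_{μ,1} and g_{(j,ν)} = δ_{ν,1}. Then A⁰·B − Dᵀ·A⁰ = f·gᵀ. -/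
/-
Write `c = β_j - δ_i` and `a(μ, ν)` for the `((i, μ), (j, ν))` entry of `A⁰` (0-based). Right
multiplication by a Jordan block adds the left neighbour of each entry and left multiplication by a
transposed one adds the upper neighbour, so the entry of `A⁰B - DᵀA⁰` is
`c·a(μ, ν) + a(μ, ν - 1) - a(μ - 1, ν)`, with out-of-range terms read as `0`. Since `a(μ, ν)` is the
coefficient of `x^μ y^ν` in `1 / (c - x + y)`, this is the coefficient of `x^μ y^ν` in
`(c - x + y) · (1 / (c - x + y)) = 1`; concretely, it is Pascal's rule.
-/

open Matrix BigOperators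

def blockJordan {m : ℕ} (sz : Fin m → ℕ) (ev : Fin m → ℂ) :
    Matrix ((i : Fin m) × Fin (sz i)) ((i : Fin m) × Fin (sz i)) ℂ :=
  Matrix.of fun p q =>
    if p.1 = q.1 then
      (if (p.2 : ℕ) = (q.2 : ℕ) then ev p.1 else 0)
        + (if (q.2 : ℕ) = (p.2 : ℕ) + 1 then 1 else 0)
    else 0

section blockJordan

variable {m : ℕ} {sz : Fin m → ℕ} {ev : Fin m → ℂ} {ι : Type*}

theorem mul_blockJordan_apply (A : Matrix ι ((j : Fin m) × Fin (sz j)) ℂ) (p : ι)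
    (j : Fin m) (ν : Fin (sz j)) :
    (A * blockJordan sz ev) p ⟨j, ν⟩
      = A p ⟨j, ν⟩ * ev j + ∑ k : Fin (sz j), if (ν : ℕ) = k + 1 then A p ⟨j, k⟩ else 0 := by
  rw [mul_apply, Fintype.sum_sigma, Finset.sum_eq_single j (fun i _ hi => by simp [blockJordan, hi])
    (by simp)]
  simp [blockJordan, mul_add, Finset.sum_add_distrib, Fin.val_inj]

theorem blockJordan_transpose_mul_apply (A : Matrix ((i : Fin m) × Fin (sz i)) ι ℂ)
    (i : Fin m) (μ : Fin (sz i)) (q : ι) :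
    ((blockJordan sz ev)ᵀ * A) ⟨i, μ⟩ q
      = ev i * A ⟨i, μ⟩ q + ∑ k : Fin (sz i), if (μ : ℕ) = k + 1 then A ⟨i, k⟩ q else 0 := by
  rw [mul_apply, Fintype.sum_sigma, Finset.sum_eq_single i (fun j _ hj => by simp [blockJordan, hj])
    (by simp)]
  simp [blockJordan, add_mul, Finset.sum_add_distrib, Fin.val_inj]

theorem mul_blockJordan_apply_zero (A : Matrix ι ((j : Fin m) × Fin (sz j)) ℂ) (p : ι)
    (j : Fin m) (h : 0 < sz j) :
    (A * blockJordan sz ev) p ⟨j, ⟨0, h⟩⟩ = A p ⟨j, ⟨0, h⟩⟩ * ev j := by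
  simp [mul_blockJordan_apply]

theorem mul_blockJordan_apply_succ (A : Matrix ι ((j : Fin m) × Fin (sz j)) ℂ) (p : ι)
    (j : Fin m) {k : ℕ} (h : k + 1 < sz j) :
    (A * blockJordan sz ev) p ⟨j, ⟨k + 1, h⟩⟩
      = A p ⟨j, ⟨k + 1, h⟩⟩ * ev j + A p ⟨j, ⟨k, k.lt_succ_self.trans h⟩⟩ := by
  rw [mul_blockJordan_apply, Finset.sum_eq_single ⟨k, k.lt_succ_self.trans h⟩]
  · simp
  · exact fun l _ hl => if_neg fun h => hl (Fin.ext (Nat.add_right_cancel h).symm)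
  · simp

theorem blockJordan_transpose_mul_apply_zero (A : Matrix ((i : Fin m) × Fin (sz i)) ι ℂ)
    (i : Fin m) (h : 0 < sz i) (q : ι) :
    ((blockJordan sz ev)ᵀ * A) ⟨i, ⟨0, h⟩⟩ q = ev i * A ⟨i, ⟨0, h⟩⟩ q := by
  simp [blockJordan_transpose_mul_apply]

theorem blockJordan_transpose_mul_apply_succ (A : Matrix ((i : Fin m) × Fin (sz i)) ι ℂ)
    (i : Fin m) {k : ℕ} (h : k + 1 < sz i) (q : ι) :
    ((blockJordan sz ev)ᵀ * A) ⟨i, ⟨k + 1, h⟩⟩ q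
      = ev i * A ⟨i, ⟨k + 1, h⟩⟩ q + A ⟨i, ⟨k, k.lt_succ_self.trans h⟩⟩ q := by
  rw [blockJordan_transpose_mul_apply, Finset.sum_eq_single ⟨k, k.lt_succ_self.trans h⟩]
  · simp
  · exact fun l _ hl => if_neg fun h => hl (Fin.ext (Nat.add_right_cancel h).symm)
  · simp

end blockJordan

noncomputable def cauchyEntry (c : ℂ) (μ ν : ℕ) : ℂ :=
  (Nat.choose (μ + ν) ν : ℂ) * (-1) ^ ν / c ^ (μ + ν + 1)

section cauchyEntry

variable {c : ℂ}

theorem cauchyEntry_zero_zero (hc : c ≠ 0) : c * cauchyEntry c 0 0 = 1 := by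
  simp [cauchyEntry, hc]

theorem cauchyEntry_succ_zero (hc : c ≠ 0) (μ : ℕ) :
    c * cauchyEntry c (μ + 1) 0 = cauchyEntry c μ 0 := by
  simp only [cauchyEntry, Nat.choose_zero_right]
  field_simp
  ring

theorem cauchyEntry_zero_succ (hc : c ≠ 0) (ν : ℕ) :
    c * cauchyEntry c 0 (ν + 1) + cauchyEntry c 0 ν = 0 := by
  simp only [cauchyEntry, zero_add, Nat.choose_self]
  field_simp
  ring

theorem cauchyEntry_succ_succ (hc : c ≠ 0) (μ ν : ℕ) :
    c * cauchyEntry c (μ + 1) (ν + 1) + cauchyEntry c (μ + 1) ν = cauchyEntry c μ (ν + 1) := by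
  have pascal : ((μ + 1 + (ν + 1)).choose (ν + 1) : ℂ)
      = (μ + 1 + ν).choose ν + (μ + (ν + 1)).choose (ν + 1) := by
    rw [show μ + 1 + (ν + 1) = μ + 1 + ν + 1 by ring, Nat.choose_succ_succ',
      show μ + 1 + ν = μ + (ν + 1) by ring, Nat.cast_add]
  simp only [cauchyEntry, pascal]
  field_simp
  ring

end cauchyEntry

theorem stmt10_general (m M : ℕ)
    (nsz : Fin m → ℕ) (Nsz : Fin M → ℕ)
    (δ : Fin m → ℂ) (β : Fin M → ℂ) (hβδ : ∀ i j, β j ≠ δ i)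
    (A0 : Matrix ((i : Fin m) × Fin (nsz i)) ((j : Fin M) × Fin (Nsz j)) ℂ)
    (hA0 : A0 = Matrix.of fun (p : (i : Fin m) × Fin (nsz i))
        (q : (j : Fin M) × Fin (Nsz j)) =>
      (Nat.choose ((p.2 : ℕ) + (q.2 : ℕ)) (q.2 : ℕ) : ℂ) * (-1) ^ (q.2 : ℕ)
        / (β q.1 - δ p.1) ^ ((p.2 : ℕ) + (q.2 : ℕ) + 1)) :
    A0 * blockJordan Nsz β - (blockJordan nsz δ)ᵀ * A0
      = Matrix.vecMulVec
          (fun p : (i : Fin m) × Fin (nsz i) => if (p.2 : ℕ) = 0 then (1 : ℂ) else 0)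
          (fun q : (j : Fin M) × Fin (Nsz j) => if (q.2 : ℕ) = 0 then (1 : ℂ) else 0) := by
  replace hA0 : A0 = of fun p q => cauchyEntry (β q.1 - δ p.1) p.2 q.2 := hA0
  subst hA0
  ext ⟨i, μ, hμ⟩ ⟨j, ν, hν⟩
  have hc : β j - δ i ≠ 0 := sub_ne_zero.mpr (hβδ i j)
  rw [Matrix.sub_apply, vecMulVec_apply]
  rcases μ with _ | μ <;> rcases ν with _ | ν
  · rw [mul_blockJordan_apply_zero, blockJordan_transpose_mul_apply_zero]
    simp only [of_apply, ↓reduceIte, mul_one]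
    linear_combination cauchyEntry_zero_zero hc
  · rw [mul_blockJordan_apply_succ, blockJordan_transpose_mul_apply_zero]
    simp only [of_apply, Nat.add_one_ne_zero, ↓reduceIte, mul_zero]
    linear_combination cauchyEntry_zero_succ hc ν
  · rw [mul_blockJordan_apply_zero, blockJordan_transpose_mul_apply_succ]
    simp only [of_apply, Nat.add_one_ne_zero, ↓reduceIte, zero_mul]
    linear_combination cauchyEntry_succ_zero hc μ
  · rw [mul_blockJordan_apply_succ, blockJordan_transpose_mul_apply_succ]
    simp only [of_apply, Nat.add_one_ne_zero, ↓reduceIte, mul_zero]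
    linear_combination cauchyEntry_succ_succ hc μ ν

/-- With block-diagonal Jordan matrices `D` (blocks `J_{n_i}(δ_i)`) and
`B` (blocks `J_{N_j}(β_j)`), `β_j ≠ δ_i`, and
`A⁰_{(i,μ),(j,ν)} = C(μ+ν−2, ν−1)·(−1)^{ν+1}/(β_j−δ_i)^{μ+ν−1}` (`1`-based; here written
`0`-based), with `f_{(i,μ)} = δ_{μ,1}` and `g_{(j,ν)} = δ_{ν,1}`:
`A⁰·B − Dᵀ·A⁰ = f·gᵀ`. -/
theorem stmt10 (m M : ℕ) (hm : 0 < m) (hM : 0 < M)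
    (nsz : Fin m → ℕ) (Nsz : Fin M → ℕ)
    (hnsz : ∀ i, 1 ≤ nsz i) (hNsz : ∀ j, 1 ≤ Nsz j)
    (δ : Fin m → ℂ) (β : Fin M → ℂ) (hβδ : ∀ i j, β j ≠ δ i)
    (A0 : Matrix ((i : Fin m) × Fin (nsz i)) ((j : Fin M) × Fin (Nsz j)) ℂ)
    (hA0 : A0 = Matrix.of fun (p : (i : Fin m) × Fin (nsz i))
        (q : (j : Fin M) × Fin (Nsz j)) =>
      (Nat.choose ((p.2 : ℕ) + (q.2 : ℕ)) (q.2 : ℕ) : ℂ) * (-1) ^ (q.2 : ℕ)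
        / (β q.1 - δ p.1) ^ ((p.2 : ℕ) + (q.2 : ℕ) + 1)) :
    A0 * blockJordan Nsz β - (blockJordan nsz δ)ᵀ * A0
      = Matrix.vecMulVec
          (fun p : (i : Fin m) × Fin (nsz i) => if (p.2 : ℕ) = 0 then (1 : ℂ) else 0)
          (fun q : (j : Fin M) × Fin (Nsz j) => if (q.2 : ℕ) = 0 then (1 : ℂ) else 0) :=
  stmt10_general m M nsz Nsz δ β hβδ A0 hA0
end

section
/- Let r be a polynomial with complex coefficients, let β, δ ∈ ℂ with β ≠ δ, and let μ, ν ≥ 1 be integers. Then the (ν−1)-st derivative of the function z ↦ r(z)/(z−δ)^μ, evaluated at z = β and divided by (ν−1)!, equals ∑_{ξ=1}^{ν} [r^{(ν−ξ)}(β)/(ν−ξ)!] · C(μ+ξ−2, ξ−1) · (−1)^{ξ−1} / (β−δ)^{μ+ξ−1}, where r^{(k)} denotes the k-th derivative of the polynomial r. -/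
/-!
Write `r(z)/(z-δ)^μ = (z-δ)^(-μ) · r(z)`. Dividing the Leibniz rule by `n!` says that the Taylor
coefficients of a product at `β` are the Cauchy product of the Taylor coefficients of the
factors. Those of `r` are `r^{(k)}(β)/k!`, and those of `(z-δ)^(-μ)` are
`(-1)^i C(μ+i-1, i) / (β-δ)^(μ+i)`, because `(-μ)(-μ-1)⋯(-μ-i+1) = (-1)^i i! C(μ+i-1, i)`.
-/

open Polynomial

section

variable {𝕜 : Type*} [NontriviallyNormedField 𝕜]

theorem Polynomial.iteratedDeriv_eval (p : 𝕜[X]) (k : ℕ) :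
    iteratedDeriv k (fun z => p.eval z) = fun z => (derivative^[k] p).eval z := by
  induction k generalizing p with
  | zero => rfl
  | succ k ih =>
    have hderiv : deriv (fun z => p.eval z) = fun z => p.derivative.eval z :=
      _root_.funext fun _ => p.deriv
    rw [iteratedDeriv_succ', hderiv, ih, Function.iterate_succ_apply]

theorem Polynomial.contDiff_eval (p : 𝕜[X]) (n : WithTop ℕ∞) :
    ContDiff 𝕜 n fun z => p.eval z := by
  simpa using p.contDiff_aeval (𝕜 := 𝕜) n

theorem prod_range_neg_natCast_sub (μ k : ℕ) :
    ∏ i ∈ Finset.range k, (-(μ : 𝕜) - i) = (-1) ^ k * μ.ascFactorial k := by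
  calc ∏ i ∈ Finset.range k, (-(μ : 𝕜) - i) = ∏ i ∈ Finset.range k, (-1 * ((μ : 𝕜) + i)) :=
        Finset.prod_congr rfl fun i _ => by ring
    _ = (-1) ^ k * μ.ascFactorial k := by
        rw [Finset.prod_mul_distrib, Finset.prod_const, Finset.card_range,
          Nat.ascFactorial_eq_prod_range]
        push_cast
        rfl

variable [CharZero 𝕜]

theorem iteratedDeriv_fun_mul_div_factorial {f g : 𝕜 → 𝕜} {x : 𝕜} {n : ℕ}
    (hf : ContDiffAt 𝕜 n f x) (hg : ContDiffAt 𝕜 n g x) :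
    iteratedDeriv n (fun z => f z * g z) x / n.factorial
      = ∑ i ∈ Finset.range (n + 1),
          iteratedDeriv i f x / i.factorial * (iteratedDeriv (n - i) g x / (n - i).factorial) := by
  rw [iteratedDeriv_fun_mul hf hg, Finset.sum_div]
  refine Finset.sum_congr rfl fun i hi => ?_
  have hn : (n.factorial : 𝕜) ≠ 0 := Nat.cast_ne_zero.2 n.factorial_ne_zero
  rw [Nat.cast_choose 𝕜 (Finset.mem_range_succ_iff.mp hi)]
  field_simp

theorem iteratedDeriv_inv_sub_pow_div_factorial (δ z : 𝕜) (μ i : ℕ) :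
    iteratedDeriv i (fun z => ((z - δ) ^ μ)⁻¹) z / i.factorial
      = (-1) ^ i * (μ + i - 1).choose i / (z - δ) ^ (μ + i) := by
  have hzpow : (fun z => ((z - δ) ^ μ)⁻¹) = fun z => (fun y : 𝕜 => y ^ (-(μ : ℤ))) (z - δ) := by
    simp [zpow_neg]
  rw [hzpow, iteratedDeriv_comp_sub_const i (fun y : 𝕜 => y ^ (-(μ : ℤ))) δ,
    iteratedDeriv_eq_iterate]
  beta_reduce
  rw [iter_deriv_zpow]
  push_cast
  rw [prod_range_neg_natCast_sub, Nat.ascFactorial_eq_factorial_mul_choose',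
    show -(μ : ℤ) - i = -((μ + i : ℕ) : ℤ) by push_cast; ring, zpow_neg, zpow_natCast]
  push_cast
  field_simp
  exact mul_div_mul_left _ _ (Nat.cast_ne_zero.2 i.factorial_ne_zero)

end

open Matrix BigOperators

theorem stmt12_general (r : Polynomial ℂ) (β δ : ℂ) (hβδ : β ≠ δ)
    (μ ν : ℕ) (hν : 1 ≤ ν) :
    iteratedDeriv (ν - 1) (fun z => r.eval z / (z - δ) ^ μ) β / (Nat.factorial (ν - 1) : ℂ)
      = ∑ ξ ∈ Finset.Icc 1 ν,
          ((Polynomial.derivative^[ν - ξ] r).eval β / (Nat.factorial (ν - ξ) : ℂ))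
            * (Nat.choose (μ + ξ - 2) (ξ - 1) : ℂ) * (-1 : ℂ) ^ (ξ - 1)
            / (β - δ) ^ (μ + ξ - 1) := by
  obtain ⟨n, rfl⟩ : ∃ n, ν = n + 1 := ⟨ν - 1, by omega⟩
  have hinv : ContDiffAt ℂ n (fun z => ((z - δ) ^ μ)⁻¹) β :=
    ((contDiffAt_id.sub contDiffAt_const).pow μ).inv (pow_ne_zero _ (sub_ne_zero.2 hβδ))
  simp only [div_eq_inv_mul (r.eval _)]
  rw [Nat.add_sub_cancel, iteratedDeriv_fun_mul_div_factorial hinv (r.contDiff_eval n).contDiffAt,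
    ← Finset.Ico_add_one_right_eq_Icc, Finset.sum_Ico_eq_sum_range, Nat.add_sub_cancel]
  refine Finset.sum_congr rfl fun i _ => ?_
  rw [iteratedDeriv_inv_sub_pow_div_factorial, r.iteratedDeriv_eval,
    show n + 1 - (1 + i) = n - i by omega, show μ + (1 + i) - 2 = μ + i - 1 by omega,
    show 1 + i - 1 = i by omega, show μ + (1 + i) - 1 = μ + i by omega]
  ring

/-- For a polynomial `r`, `β ≠ δ`, and integers `μ, ν ≥ 1`,
`(1/(ν−1)!)·(d/dz)^{ν−1}|_{z=β} (r(z)/(z−δ)^μ)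
  = ∑_{ξ=1}^{ν} [r^{(ν−ξ)}(β)/(ν−ξ)!]·C(μ+ξ−2, ξ−1)·(−1)^{ξ−1}/(β−δ)^{μ+ξ−1}`. -/
theorem stmt12 (r : Polynomial ℂ) (β δ : ℂ) (hβδ : β ≠ δ)
    (μ ν : ℕ) (hμ : 1 ≤ μ) (hν : 1 ≤ ν) :
    iteratedDeriv (ν - 1) (fun z => r.eval z / (z - δ) ^ μ) β / (Nat.factorial (ν - 1) : ℂ)
      = ∑ ξ ∈ Finset.Icc 1 ν,
          ((Polynomial.derivative^[ν - ξ] r).eval β / (Nat.factorial (ν - ξ) : ℂ))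
            * (Nat.choose (μ + ξ - 2) (ξ - 1) : ℂ) * (-1 : ℂ) ^ (ξ - 1)
            / (β - δ) ^ (μ + ξ - 1) :=
  stmt12_general r β δ hβδ μ ν hν
end

section
/- Let B be an N×N complex matrix and D an n×n complex matrix, each of whose eigenvalues all lie in the open unit disk {z ∈ ℂ : |z| < 1}, and let f ∈ ℂⁿ, g ∈ ℂᴺ. Then the contour integral over the positively oriented unit circle of the matrix-valued function z ↦ (z·I_n − Dᵀ)⁻¹·f·gᵀ·(z·I_N − B)⁻¹ vanishes: ∮_{|z|=1} (z·I_n − Dᵀ)⁻¹·f·gᵀ·(z·I_N − B)⁻¹ dz = 0. -/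
/-!
The integrand is holomorphic outside the closed unit disk, and since each resolvent is
`O(|z|⁻¹)` at infinity it decays like `|z|⁻²`. Pushing the contour out to a circle of radius `R`
bounds the integral by `O(R⁻¹)`, so it vanishes. Because `f gᵀ` has rank one, the `(a, b)` entry
of the integrand is the product of a linear functional of each of the two resolvents.
-/

open Matrix Complex Metric Filter Asymptotics Bornology

theorem circleIntegral_eq_zero_of_differentiableAt_of_isLittleO
    {E : Type*} [NormedAddCommGroup E] [NormedSpace ℂ E] {f : ℂ → E} {r : ℝ} (hr : 0 < r)
    (hd : ∀ z : ℂ, r ≤ ‖z‖ → DifferentiableAt ℂ f z) (hf : f =o[cobounded ℂ] (·⁻¹)) :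
    ∮ z in C(0, r), f z = 0 := by
  refine norm_le_zero_iff.mp (le_of_forall_pos_le_add fun ε hε => ?_)
  have hbound := hf.def (div_pos hε Real.two_pi_pos)
  rw [← comap_norm_atTop, eventually_comap, eventually_atTop] at hbound
  obtain ⟨R₀, hR₀⟩ := hbound
  set R := max r R₀
  have hrR : r ≤ R := le_max_left _ _
  have hR : 0 < R := hr.trans_le hrR
  have hannulus : ∮ z in C(0, R), f z = ∮ z in C(0, r), f z := by
    refine circleIntegral_eq_of_differentiable_on_annulus_off_countable hr hrR Set.countable_empty
      (fun z hz => (hd z ?_).continuousAt.continuousWithinAt) (fun z hz => hd z ?_)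
    · simpa using hz.2
    · exact (by simpa using hz.1.2 : r < ‖z‖).le
  have hsphere : ∀ z ∈ sphere (0 : ℂ) R, ‖f z‖ ≤ ε / (2 * Real.pi) / R := by
    intro z hz
    rw [mem_sphere_zero_iff_norm] at hz
    simpa [hz, div_eq_mul_inv] using hR₀ ‖z‖ (hz ▸ le_max_right _ _) z rfl
  rw [← hannulus, zero_add]
  calc ‖∮ z in C(0, R), f z‖ ≤ 2 * Real.pi * R * (ε / (2 * Real.pi) / R) :=
        circleIntegral.norm_integral_le_of_norm_le_const hR.le hsphere
    _ = ε := by field_simp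

theorem mul_isLittleO_inv_of_isBigO_inv {u v : ℂ → ℂ} (hu : u =O[cobounded ℂ] (·⁻¹))
    (hv : v =O[cobounded ℂ] (·⁻¹)) : (fun z => u z * v z) =o[cobounded ℂ] (·⁻¹) := by
  have hinv : (fun z : ℂ => z⁻¹) =o[cobounded ℂ] (fun _ => (1 : ℂ)) :=
    (isLittleO_one_iff ℂ).mpr tendsto_inv₀_cobounded
  exact (hu.mul hv).trans_isLittleO (by simpa using hinv.mul_isBigO (isBigO_refl (·⁻¹) _))

theorem circleIntegral_map_resolvent_mul_map_resolvent_eq_zero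
    {A A' : Type*} [NormedRing A] [NormedAlgebra ℂ A] [CompleteSpace A]
    [NormedRing A'] [NormedAlgebra ℂ A'] [CompleteSpace A']
    {a : A} {b : A'} {r : ℝ} (hr : 0 < r)
    (ha : ∀ z ∈ spectrum ℂ a, ‖z‖ < r) (hb : ∀ z ∈ spectrum ℂ b, ‖z‖ < r)
    (L : A →L[ℂ] ℂ) (L' : A' →L[ℂ] ℂ) :
    ∮ z in C(0, r), L (resolvent a z) * L' (resolvent b z) = 0 := by
  refine circleIntegral_eq_zero_of_differentiableAt_of_isLittleO hr (fun z hz => ?_) ?_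
  · have hza : z ∈ resolventSet ℂ a := spectrum.notMem_iff.mp fun hs => (ha z hs).not_ge hz
    have hzb : z ∈ resolventSet ℂ b := spectrum.notMem_iff.mp fun hs => (hb z hs).not_ge hz
    exact (L.differentiableAt.comp z
      (spectrum.hasDerivAt_resolvent_const_left hza).differentiableAt).mul
        (L'.differentiableAt.comp z
          (spectrum.hasDerivAt_resolvent_const_left hzb).differentiableAt)
  · exact mul_isLittleO_inv_of_isBigO_inv
      ((L.isBigO_comp _ _).trans (spectrum.resolvent_isBigO_inv a))
      ((L'.isBigO_comp _ _).trans (spectrum.resolvent_isBigO_inv b))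

theorem Matrix.spectrum_transpose {m R : Type*} [Fintype m] [DecidableEq m] [CommRing R]
    (M : Matrix m m R) : spectrum R Mᵀ = spectrum R M := by
  ext z
  rw [spectrum.mem_iff, spectrum.mem_iff, ← isUnit_transpose (algebraMap R _ z - M), transpose_sub,
    algebraMap_eq_diagonal, diagonal_transpose]

theorem Matrix.inv_smul_one_sub_eq_resolvent {m 𝕜 : Type*} [Fintype m] [DecidableEq m] [Field 𝕜]
    (M : Matrix m m 𝕜) (z : 𝕜) : (z • (1 : Matrix m m 𝕜) - M)⁻¹ = resolvent M z := by
  rw [resolvent, nonsing_inv_eq_ringInverse, Algebra.algebraMap_eq_smul_one]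

attribute [local instance] Matrix.linftyOpNormedRing Matrix.linftyOpNormedAlgebra

/-- If all eigenvalues of `B` and `D` lie in the open unit disk, then
(entrywise) `∮_{|z|=1} (z·I_n − Dᵀ)⁻¹·f·gᵀ·(z·I_N − B)⁻¹ dz = 0`. -/
theorem stmt15 (n N : ℕ)
    (B : Matrix (Fin N) (Fin N) ℂ) (D : Matrix (Fin n) (Fin n) ℂ)
    (hB : ∀ z ∈ spectrum ℂ B, ‖z‖ < 1)
    (hD : ∀ z ∈ spectrum ℂ D, ‖z‖ < 1)
    (f : Fin n → ℂ) (g : Fin N → ℂ) :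
    ∀ (a : Fin n) (b : Fin N),
      (∮ z in C(0, 1),
        (((z • (1 : Matrix (Fin n) (Fin n) ℂ) - Dᵀ)⁻¹ * Matrix.vecMulVec f g
          * (z • (1 : Matrix (Fin N) (Fin N) ℂ) - B)⁻¹) a b)) = 0 := by
  intro a b
  let L : Matrix (Fin n) (Fin n) ℂ →L[ℂ] ℂ := LinearMap.toContinuousLinearMap
    { toFun := fun X => (X *ᵥ f) a
      map_add' := fun X Y => by simp [add_mulVec]
      map_smul' := fun c X => by simp [smul_mulVec] }
  let L' : Matrix (Fin N) (Fin N) ℂ →L[ℂ] ℂ := LinearMap.toContinuousLinearMap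
    { toFun := fun X => (g ᵥ* X) b
      map_add' := fun X Y => by simp [vecMul_add]
      map_smul' := fun c X => by simp [vecMul_smul] }
  have hDT : ∀ z ∈ spectrum ℂ Dᵀ, ‖z‖ < 1 := by rwa [spectrum_transpose]
  convert circleIntegral_map_resolvent_mul_map_resolvent_eq_zero one_pos hDT hB L L' using 3 with z
  rw [inv_smul_one_sub_eq_resolvent, inv_smul_one_sub_eq_resolvent, mul_vecMulVec, vecMulVec_mul,
    vecMulVec_apply]
  rfl
end

section
/- Let A be an n×N complex matrix, B an N×N complex matrix and D an n×n complex matrix, with all eigenvalues of B and D in the open unit disk, and let f ∈ ℂⁿ, g ∈ ℂᴺ satisfy A·B − Dᵀ·A = f·gᵀ. Then for every K ∈ ℕ and t₁,…,t_K ∈ ℂ, (1/(2πi)) · ∮_{|z|=1} (z·I_n − Dᵀ)⁻¹·f·gᵀ·(z·I_N − B)⁻¹ · exp(∑_{i=1}^K t_i zⁱ) dz = A·exp(∑_{i=1}^K t_i Bⁱ) − exp(∑_{i=1}^K t_i (Dᵀ)ⁱ)·A. -/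
/-!
Since `A B - Dᵀ A = f gᵀ`, we have `f gᵀ = (z - Dᵀ) A - A (z - B)`, so on the unit circle the
integrand is `φ(z) (A (z - B)⁻¹ - (z - Dᵀ)⁻¹ A)` with `φ = exp ∘ p`, `p(z) = ∑ tᵢ zⁱ`. It therefore
suffices to prove the Cauchy formula `∮ φ(z) (z - M)⁻¹ dz = 2πi φ(M)` for an element `M` of a
complex Banach algebra with spectral radius `< 1`.

For this, write `p(z) - p(M) = (z - M) Q(z)` with `Q` polynomial, and `exp X = 1 + X E(X)` with `E`
entire. Since `p(z) - p(M)` commutes with `p(M)`,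
`φ(z) (z - M)⁻¹ = (z - M)⁻¹ φ(M) + Q(z) E(p(z) - p(M)) φ(M)`, and the second term is entire, so
it integrates to zero. Finally `∮ (z - M)⁻¹ dz = 2πi`: expanding
`(z - M)⁻¹ = ∑_{j<k} z^{-j-1} M^j + z^{-k} (z - M)⁻¹ M^k`, only `j = 0` contributes, and the
remainder is `O(‖M^k‖)`, which tends to zero by Gelfand's formula.
-/

open Matrix Metric Filter Topology Polynomial NormedSpace
open scoped Nat

theorem ContinuousLinearMap.circleIntegral_comp_comm {E F : Type*} [NormedAddCommGroup E]
    [NormedSpace ℂ E] [CompleteSpace E] [NormedAddCommGroup F] [NormedSpace ℂ F] [CompleteSpace F]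
    (L : E →L[ℂ] F) {f : ℂ → E} {c : ℂ} {R : ℝ} (hf : CircleIntegrable f c R) :
    (∮ z in C(c, R), L (f z)) = L (∮ z in C(c, R), f z) := by
  simp only [circleIntegral, ← L.intervalIntegral_comp_comm hf.out, L.map_smul]

theorem LinearMap.circleIntegral_comp_comm {E F : Type*} [NormedAddCommGroup E] [NormedSpace ℂ E]
    [FiniteDimensional ℂ E] [NormedAddCommGroup F] [NormedSpace ℂ F] [CompleteSpace F]
    (L : E →ₗ[ℂ] F) {f : ℂ → E} {c : ℂ} {R : ℝ} (hf : CircleIntegrable f c R) :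
    (∮ z in C(c, R), L (f z)) = L (∮ z in C(c, R), f z) :=
  (LinearMap.toContinuousLinearMap L).circleIntegral_comp_comm hf

theorem circleIntegral_inv_pow_succ {R : ℝ} (hR : 0 < R) (j : ℕ) :
    (∮ z in C(0, R), (z ^ (j + 1))⁻¹) = if j = 0 then 2 * Real.pi * Complex.I else 0 := by
  split_ifs with hj
  · simpa [hj] using circleIntegral.integral_sub_inv_of_mem_ball (mem_ball_self hR (x := (0 : ℂ)))
  · have h := circleIntegral.integral_sub_zpow_of_ne (n := -((j + 1 : ℕ) : ℤ)) (by omega) 0 0 R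
    simp_rw [sub_zero, _root_.zpow_neg, zpow_natCast] at h
    exact h

section Ring

variable {R A : Type*} [CommSemiring R] [Ring A] [Algebra R A] {a : A} {z : R}

theorem resolvent_mul_cancel (hz : z ∈ resolventSet R a) :
    resolvent a z * (algebraMap R A z - a) = 1 :=
  Ring.inverse_mul_cancel _ (spectrum.mem_resolventSet_iff.mp hz)

theorem mul_resolvent_cancel (hz : z ∈ resolventSet R a) :
    (algebraMap R A z - a) * resolvent a z = 1 :=
  Ring.mul_inverse_cancel _ (spectrum.mem_resolventSet_iff.mp hz)

end Ring

theorem resolvent_eq_geom_sum_add {𝕜 A : Type*} [Field 𝕜] [Ring A] [Algebra 𝕜 A] {a : A} {z : 𝕜}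
    (hz : z ∈ resolventSet 𝕜 a) (hz0 : z ≠ 0) (k : ℕ) :
    resolvent a z =
      ∑ j ∈ Finset.range k, (z ^ (j + 1))⁻¹ • a ^ j + (z ^ k)⁻¹ • (resolvent a z * a ^ k) := by
  have hstep : resolvent a z = z⁻¹ • 1 + z⁻¹ • (resolvent a z * a) := by
    have h := resolvent_mul_cancel hz
    rw [mul_sub, ← Algebra.commutes, ← Algebra.smul_def] at h
    rw [← smul_add, ← h, sub_add_cancel, smul_smul, inv_mul_cancel₀ hz0, one_smul]
  induction k with
  | zero => simp
  | succ k ih =>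
    conv_lhs => rw [ih]
    conv_lhs => enter [2, 2, 1]; rw [hstep]
    rw [Finset.sum_range_succ, add_assoc, add_mul, smul_mul_assoc, smul_mul_assoc, one_mul,
      mul_assoc, ← pow_succ', smul_add, smul_smul, smul_smul, ← mul_inv, ← pow_succ]

section NormedAlgebra

variable {𝔸 : Type*} [NormedRing 𝔸] [NormedAlgebra ℂ 𝔸]

theorem sphere_subset_resolventSet {a : 𝔸} {R : ℝ} (ha : spectralRadius ℂ a < ENNReal.ofReal R) :
    sphere (0 : ℂ) R ⊆ resolventSet ℂ a := fun z hz =>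
  spectrum.mem_resolventSet_of_spectralRadius_lt <| by
    rwa [← enorm_eq_nnnorm, ← ofReal_norm, mem_sphere_zero_iff_norm.mp hz]

theorem exists_differentiable_algebraMap_eval_sub_aeval_eq_mul (a : 𝔸) (p : ℂ[X]) :
    ∃ Q : ℂ → 𝔸, Differentiable ℂ Q ∧
      ∀ z, algebraMap ℂ 𝔸 (p.eval z) - aeval a p = (algebraMap ℂ 𝔸 z - a) * Q z := by
  induction p using Polynomial.induction_on' with
  | add p q hp hq =>
    obtain ⟨P, hPd, hP⟩ := hp
    obtain ⟨Q, hQd, hQ⟩ := hq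
    refine ⟨P + Q, hPd.add hQd, fun z => ?_⟩
    rw [Pi.add_apply, mul_add, ← hP, ← hQ, eval_add, map_add, map_add]
    abel
  | monomial n c =>
    refine ⟨fun z => c • ∑ i ∈ Finset.range n, (z • (1 : 𝔸)) ^ i * a ^ (n - 1 - i), by fun_prop,
      fun z => ?_⟩
    rw [mul_smul_comm, Algebra.algebraMap_eq_smul_one z,
      ((Commute.one_left a).smul_left z).mul_geom_sum₂]
    simp [Algebra.smul_def, mul_sub]

variable (𝔸) in
noncomputable def expSubOneDivSeries : FormalMultilinearSeries ℂ 𝔸 𝔸 :=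
  FormalMultilinearSeries.ofScalars 𝔸 fun n => ((n + 1)! : ℂ)⁻¹

noncomputable def expSubOneDiv : 𝔸 → 𝔸 := (expSubOneDivSeries 𝔸).sum

theorem expSubOneDivSeries_radius : (expSubOneDivSeries 𝔸).radius = ⊤ := by
  refine FormalMultilinearSeries.ofScalars_radius_eq_top_of_tendsto 𝔸 _
    (Eventually.of_forall fun n => inv_ne_zero (Nat.cast_ne_zero.mpr n.succ.factorial_ne_zero)) ?_
  have hratio : ∀ n : ℕ, ‖((n.succ + 1)! : ℂ)⁻¹‖ / ‖((n + 1)! : ℂ)⁻¹‖ = ((n : ℝ) + 2)⁻¹ := by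
    intro n
    rw [norm_inv, norm_inv, Complex.norm_natCast, Complex.norm_natCast, Nat.factorial_succ (n + 1)]
    push_cast
    field_simp
    ring
  simp_rw [hratio]
  exact tendsto_inv_atTop_zero.comp (tendsto_atTop_add_const_right _ 2 tendsto_natCast_atTop_atTop)

variable [CompleteSpace 𝔸]

theorem spectralRadius_lt_ofReal_of_forall_norm_lt {a : 𝔸} {R : ℝ} (hR : 0 < R)
    (h : ∀ z ∈ spectrum ℂ a, ‖z‖ < R) : spectralRadius ℂ a < ENNReal.ofReal R := by
  rcases (spectrum ℂ a).eq_empty_or_nonempty with hempty | hne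
  · simpa [spectralRadius, hempty] using hR
  · exact spectrum.spectralRadius_lt_of_forall_lt_of_nonempty hne fun z hz =>
      Real.lt_toNNReal_iff_coe_lt.mpr (h z hz)

theorem tendsto_norm_pow_div_pow_of_spectralRadius_lt {a : 𝔸} {R : ℝ}
    (ha : spectralRadius ℂ a < ENNReal.ofReal R) :
    Tendsto (fun k : ℕ => ‖a ^ k‖ / R ^ k) atTop (𝓝 0) := by
  obtain ⟨s, -, hρs, hsR⟩ := ENNReal.lt_iff_exists_real_btwn.mp ha
  have hs : 0 < s := ENNReal.ofReal_pos.mp (pos_of_gt hρs)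
  have hsR : s < R := (ENNReal.ofReal_lt_ofReal_iff (ENNReal.ofReal_pos.mp (pos_of_gt hsR))).mp hsR
  have hR : 0 < R := hs.trans hsR
  have hbound : ∀ᶠ k : ℕ in atTop, ‖a ^ k‖ / R ^ k ≤ (s / R) ^ k := by
    have hgelfand := spectrum.pow_norm_pow_one_div_tendsto_nhds_spectralRadius a
    filter_upwards [hgelfand.eventually_lt_const hρs, eventually_ne_atTop 0] with k hk hk0
    rw [ENNReal.ofReal_lt_ofReal_iff hs, one_div] at hk
    rw [div_pow, ← Real.rpow_inv_natCast_pow (norm_nonneg (a ^ k)) hk0]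
    gcongr
  exact squeeze_zero' (Eventually.of_forall fun k => by positivity) hbound
    (tendsto_pow_atTop_nhds_zero_of_lt_one (by positivity) ((div_lt_one hR).mpr hsR))

theorem continuousOn_resolvent (a : 𝔸) : ContinuousOn (resolvent a) (resolventSet ℂ a) :=
  fun _ hz => (spectrum.hasDerivAt_resolvent_const_left hz).continuousAt.continuousWithinAt

theorem circleIntegral_resolvent {a : 𝔸} {R : ℝ} (ha : spectralRadius ℂ a < ENNReal.ofReal R) :
    (∮ z in C(0, R), resolvent a z) = (2 * Real.pi * Complex.I) • (1 : 𝔸) := by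
  have hR : 0 < R := ENNReal.ofReal_pos.mp (pos_of_gt ha)
  have hsub := sphere_subset_resolventSet ha
  have hcont := (continuousOn_resolvent a).mono hsub
  have hz0 : ∀ z ∈ sphere (0 : ℂ) R, z ≠ 0 := fun z hz => ne_of_mem_sphere hz hR.ne'
  have hinv_pow : ∀ k : ℕ, ContinuousOn (fun z : ℂ => (z ^ k)⁻¹) (sphere 0 R) := fun k =>
    (continuousOn_id.pow k).inv₀ fun z hz => pow_ne_zero k (hz0 z hz)
  obtain ⟨C, hC⟩ := (isCompact_sphere (0 : ℂ) R).exists_bound_of_continuousOn hcont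
  set rem : ℕ → 𝔸 := fun k => ∮ z in C(0, R), (z ^ k)⁻¹ • (resolvent a z * a ^ k)
  have hrem : ∀ k,
      (∮ z in C(0, R), resolvent a z) = (2 * Real.pi * Complex.I) • 1 + rem (k + 1) := by
    intro k
    rw [circleIntegral.integral_congr hR.le fun z hz =>
        resolvent_eq_geom_sum_add (hsub hz) (hz0 z hz) (k + 1),
      circleIntegral.integral_add, circleIntegral.integral_fun_sum]
    · simp only [circleIntegral.integral_smul_const, circleIntegral_inv_pow_succ hR]
      simp [rem]
    · exact fun j _ => ((hinv_pow (j + 1)).smul continuousOn_const).circleIntegrable hR.le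
    · exact (continuousOn_finsetSum _ fun j _ =>
        (hinv_pow (j + 1)).smul continuousOn_const).circleIntegrable hR.le
    · exact ((hinv_pow (k + 1)).smul (hcont.mul continuousOn_const)).circleIntegrable hR.le
  have hlim : Tendsto rem atTop (𝓝 0) := by
    refine squeeze_zero_norm (fun k => ?_) (by simpa using
      (tendsto_norm_pow_div_pow_of_spectralRadius_lt ha).const_mul (2 * Real.pi * R * C))
    rw [mul_assoc]
    refine circleIntegral.norm_integral_le_of_norm_le_const hR.le fun z hz => ?_
    rw [norm_smul, norm_inv, norm_pow, mem_sphere_zero_iff_norm.mp hz, inv_mul_eq_div,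
      mul_div_assoc']
    gcongr
    exact (norm_mul_le _ _).trans (by gcongr; exact hC z hz)
  have hconst : Tendsto (fun k => rem (k + 1)) atTop
      (𝓝 ((∮ z in C(0, R), resolvent a z) - (2 * Real.pi * Complex.I) • 1)) :=
    tendsto_const_nhds.congr fun k => by rw [hrem k, add_sub_cancel_left]
  exact sub_eq_zero.mp (tendsto_nhds_unique hconst ((tendsto_add_atTop_iff_nat 1).mpr hlim))

theorem continuousOn_cexp_eval_smul_resolvent {a : 𝔸} {R : ℝ}
    (ha : spectralRadius ℂ a < ENNReal.ofReal R) (p : ℂ[X]) :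
    ContinuousOn (fun z => Complex.exp (p.eval z) • resolvent a z) (sphere 0 R) :=
  p.differentiable.cexp.continuous.continuousOn.smul
    ((continuousOn_resolvent a).mono (sphere_subset_resolventSet ha))

theorem analyticAt_expSubOneDiv (x : 𝔸) : AnalyticAt ℂ expSubOneDiv x :=
  HasFPowerSeriesOnBall.analyticAt_of_mem
    ((expSubOneDivSeries 𝔸).hasFPowerSeriesOnBall (by simp [expSubOneDivSeries_radius]))
    (by simp [expSubOneDivSeries_radius])

theorem mul_expSubOneDiv (x : 𝔸) : x * expSubOneDiv x = exp x - 1 := by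
  have hG : HasSum (fun n => ((n + 1)! : ℂ)⁻¹ • x ^ n) (expSubOneDiv x) := by
    simpa [expSubOneDiv, expSubOneDivSeries, FormalMultilinearSeries.ofScalars_apply_eq] using
      (expSubOneDivSeries 𝔸).hasSum (x := x) (by simp [expSubOneDivSeries_radius])
  have hexp := (hasSum_nat_add_iff' 1).mpr (exp_series_hasSum_exp' (𝕂 := ℂ) x)
  refine (hG.mul_left x).unique ?_
  simpa [mul_smul_comm, ← pow_succ'] using hexp

theorem circleIntegral_cexp_eval_smul_resolvent {a : 𝔸} {R : ℝ}
    (ha : spectralRadius ℂ a < ENNReal.ofReal R) (p : ℂ[X]) :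
    (∮ z in C(0, R), Complex.exp (p.eval z) • resolvent a z) =
      (2 * Real.pi * Complex.I) • exp (aeval a p) := by
  have hR : 0 < R := ENNReal.ofReal_pos.mp (pos_of_gt ha)
  obtain ⟨Q, hQd, hQ⟩ := exists_differentiable_algebraMap_eval_sub_aeval_eq_mul a p
  set X : ℂ → 𝔸 := fun z => algebraMap ℂ 𝔸 (p.eval z) - aeval a p
  have hsplit : Set.EqOn (fun z => Complex.exp (p.eval z) • resolvent a z)
      (fun z => resolvent a z * exp (aeval a p) + Q z * expSubOneDiv (X z) * exp (aeval a p))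
      (sphere 0 R) := by
    intro z hz
    have hunit : resolvent a z * (algebraMap ℂ 𝔸 z - a) = 1 :=
      resolvent_mul_cancel (sphere_subset_resolventSet ha hz)
    have hcomm : Commute (X z) (aeval a p) :=
      (Algebra.commute_algebraMap_left _ _).sub_left (Commute.refl _)
    calc Complex.exp (p.eval z) • resolvent a z
        = resolvent a z * exp (X z + aeval a p) := by
          rw [sub_add_cancel, ← algebraMap_exp_comm, ← Complex.exp_eq_exp_ℂ, Algebra.smul_def,
            Algebra.commutes]
      _ = resolvent a z * ((1 + X z * expSubOneDiv (X z)) * exp (aeval a p)) := by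
          let +nondep : NormedAlgebra ℚ 𝔸 := .restrictScalars ℚ ℂ 𝔸
          rw [exp_add_of_commute hcomm, mul_expSubOneDiv, add_sub_cancel]
      _ = _ := by
          simp only [X, hQ z, mul_add, ← mul_assoc, hunit, one_mul, add_mul]
  have hhol : Differentiable ℂ fun z => Q z * expSubOneDiv (X z) * exp (aeval a p) := by
    have hX : Differentiable ℂ X := by
      simp only [X, Algebra.algebraMap_eq_smul_one]
      exact (p.differentiable.smul_const 1).sub_const _
    exact (hQd.mul fun z => (analyticAt_expSubOneDiv _).differentiableAt.comp z (hX z)).mul_const _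
  have hres := (continuousOn_resolvent a).mono (sphere_subset_resolventSet ha)
  rw [circleIntegral.integral_congr hR.le hsplit, circleIntegral.integral_add,
    Complex.circleIntegral_eq_zero_of_differentiable_on_off_countable hR.le Set.countable_empty
      hhol.continuous.continuousOn fun z _ => hhol z, add_zero]
  · have := ((ContinuousLinearMap.mul ℂ 𝔸).flip (exp (aeval a p))).circleIntegral_comp_comm
      (hres.circleIntegrable hR.le)
    simp only [ContinuousLinearMap.flip_apply, ContinuousLinearMap.mul_apply'] at this
    rw [this, circleIntegral_resolvent ha, smul_one_mul]
  · exact (hres.mul continuousOn_const).circleIntegrable hR.le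
  · exact hhol.continuous.continuousOn.circleIntegrable hR.le

end NormedAlgebra

attribute [local instance] Matrix.linftyOpNormedRing Matrix.linftyOpNormedAlgebra

namespace Matrix

variable {m n R : Type*} [Fintype m] [DecidableEq m] [Fintype n] [DecidableEq n] [CommRing R]

theorem spectrum_transpose_s16 (M : Matrix m m R) : spectrum R Mᵀ = spectrum R M := by
  ext z
  rw [spectrum.mem_iff, spectrum.mem_iff, ← isUnit_transpose (algebraMap R _ z - M), transpose_sub,
    algebraMap_eq_diagonal, diagonal_transpose]

theorem inv_smul_one_sub_eq_resolvent_s16 (M : Matrix m m R) (z : R) :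
    (z • (1 : Matrix m m R) - M)⁻¹ = resolvent M z := by
  rw [nonsing_inv_eq_ringInverse, resolvent, Algebra.algebraMap_eq_smul_one]

theorem resolvent_mul_sub_mul_mul_resolvent (A : Matrix m n R) {B : Matrix n n R}
    {D : Matrix m m R} {z : R} (hB : z ∈ resolventSet R B) (hD : z ∈ resolventSet R D) :
    resolvent D z * (A * B - D * A) * resolvent B z = A * resolvent B z - resolvent D z * A := by
  have hsylv : A * B - D * A = (algebraMap R _ z - D) * A - A * (algebraMap R _ z - B) := by
    simp only [Algebra.algebraMap_eq_smul_one, Matrix.sub_mul, Matrix.mul_sub, Matrix.smul_mul,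
      Matrix.mul_smul, Matrix.one_mul, Matrix.mul_one]
    abel
  rw [hsylv, Matrix.mul_sub, Matrix.sub_mul, ← Matrix.mul_assoc (resolvent D z),
    resolvent_mul_cancel hD, Matrix.one_mul, Matrix.mul_assoc, Matrix.mul_assoc,
    mul_resolvent_cancel hB, Matrix.mul_one]

theorem circleIntegral_resolvent_mul_sub_mul_mul_resolvent_apply (A : Matrix m n ℂ)
    {B : Matrix n n ℂ} {D : Matrix m m ℂ} {r : ℝ} (hB : spectralRadius ℂ B < ENNReal.ofReal r)
    (hD : spectralRadius ℂ D < ENNReal.ofReal r) (p : ℂ[X]) (i : m) (j : n) :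
    (∮ z in C(0, r),
      (resolvent D z * (A * B - D * A) * resolvent B z) i j * Complex.exp (p.eval z)) =
      (2 * Real.pi * Complex.I) * (A * exp (aeval B p) - exp (aeval D p) * A) i j := by
  have hr : 0 < r := ENNReal.ofReal_pos.mp (pos_of_gt hB)
  set ℓB := entryLinearMap ℂ ℂ i j ∘ₗ mulLeftLinearMap n ℂ A
  set ℓD := entryLinearMap ℂ ℂ i j ∘ₗ mulRightLinearMap m ℂ A
  have hintegrand : Set.EqOn
      (fun z => (resolvent D z * (A * B - D * A) * resolvent B z) i j * Complex.exp (p.eval z))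
      (fun z => ℓB (Complex.exp (p.eval z) • resolvent B z)
        - ℓD (Complex.exp (p.eval z) • resolvent D z)) (sphere 0 r) := fun z hz => by
    simp [resolvent_mul_sub_mul_mul_resolvent A (sphere_subset_resolventSet hB hz)
      (sphere_subset_resolventSet hD hz), ℓB, ℓD, sub_mul, mul_comm]
  have hcontB := continuousOn_cexp_eval_smul_resolvent hB p
  have hcontD := continuousOn_cexp_eval_smul_resolvent hD p
  have hℓB : CircleIntegrable (fun z => ℓB (Complex.exp (p.eval z) • resolvent B z)) 0 r :=
    (ℓB.continuous_of_finiteDimensional.comp_continuousOn hcontB).circleIntegrable hr.le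
  have hℓD : CircleIntegrable (fun z => ℓD (Complex.exp (p.eval z) • resolvent D z)) 0 r :=
    (ℓD.continuous_of_finiteDimensional.comp_continuousOn hcontD).circleIntegrable hr.le
  rw [circleIntegral.integral_congr hr.le hintegrand, circleIntegral.integral_sub hℓB hℓD,
    ℓB.circleIntegral_comp_comm (hcontB.circleIntegrable hr.le),
    ℓD.circleIntegral_comp_comm (hcontD.circleIntegrable hr.le),
    circleIntegral_cexp_eval_smul_resolvent hB, circleIntegral_cexp_eval_smul_resolvent hD]
  simp only [ℓB, ℓD, LinearMap.comp_apply, mulLeftLinearMap_apply, mulRightLinearMap_apply,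
    entryLinearMap_apply, Matrix.mul_smul, Matrix.smul_mul, Matrix.smul_apply, smul_eq_mul,
    Matrix.sub_apply, mul_sub]
  -- the two sides differ only in the (definitionally equal) matrix instances behind `exp`
  rfl

end Matrix

/-- If all eigenvalues of `B` and `D` lie in the open unit disk and
`A·B − Dᵀ·A = f·gᵀ`, then (entrywise)
`(1/(2πi))·∮_{|z|=1} (zI−Dᵀ)⁻¹·f·gᵀ·(zI−B)⁻¹·exp(∑ tᵢ zⁱ) dz
  = A·exp(∑ tᵢ Bⁱ) − exp(∑ tᵢ (Dᵀ)ⁱ)·A`. -/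
theorem stmt16 (n N : ℕ) (A : Matrix (Fin n) (Fin N) ℂ)
    (B : Matrix (Fin N) (Fin N) ℂ) (D : Matrix (Fin n) (Fin n) ℂ)
    (hB : ∀ z ∈ spectrum ℂ B, ‖z‖ < 1)
    (hD : ∀ z ∈ spectrum ℂ D, ‖z‖ < 1)
    (f : Fin n → ℂ) (g : Fin N → ℂ)
    (h : A * B - Dᵀ * A = Matrix.vecMulVec f g)
    (K : ℕ) (t : Fin K → ℂ) :
    ∀ (a : Fin n) (b : Fin N),
      (2 * Real.pi * Complex.I)⁻¹ *
        (∮ z in C(0, 1),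
          ((((z • (1 : Matrix (Fin n) (Fin n) ℂ) - Dᵀ)⁻¹ * Matrix.vecMulVec f g
            * (z • (1 : Matrix (Fin N) (Fin N) ℂ) - B)⁻¹) a b)
            * Complex.exp (∑ i : Fin K, t i * z ^ ((i : ℕ) + 1))))
      = (A * NormedSpace.exp (∑ i : Fin K, t i • B ^ ((i : ℕ) + 1))
          - NormedSpace.exp (∑ i : Fin K, t i • (Dᵀ) ^ ((i : ℕ) + 1)) * A) a b := by
  intro a b
  set p : ℂ[X] := ∑ i : Fin K, monomial ((i : ℕ) + 1) (t i)
  have hp : ∀ z, p.eval z = ∑ i : Fin K, t i * z ^ ((i : ℕ) + 1) := fun z => by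
    simp [p, eval_finsetSum]
  have hpM : ∀ {m : ℕ} (M : Matrix (Fin m) (Fin m) ℂ),
      aeval M p = ∑ i : Fin K, t i • M ^ ((i : ℕ) + 1) := fun M => by
    simp [p, Algebra.smul_def]
  have key := circleIntegral_resolvent_mul_sub_mul_mul_resolvent_apply A
    (spectralRadius_lt_ofReal_of_forall_norm_lt one_pos hB)
    (spectralRadius_lt_ofReal_of_forall_norm_lt (a := Dᵀ) one_pos (by rwa [spectrum_transpose_s16]))
    p a b
  simp only [h, hp, hpM, ← inv_smul_one_sub_eq_resolvent_s16] at key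
  rw [key]
  exact inv_mul_cancel_left₀ Complex.two_pi_I_ne_zero _
end

section
/- Let A be an n×N complex matrix, B an N×N complex matrix, D an n×n complex matrix, f ∈ ℂⁿ, g ∈ ℂᴺ with A·B − Dᵀ·A = f·gᵀ, and let F be an l×n and C an l×N complex matrix with τ := det(F·A·Cᵀ) ≠ 0. Set M := Cᵀ·(F·A·Cᵀ)⁻¹·F (an N×n matrix) and, for z ∈ ℂ with Dᵀ − z·I_n invertible, define H(z) := τ·(1 + gᵀ·M·(Dᵀ − z·I_n)⁻¹·f) and G(z) := z + gᵀ·B·M·(Dᵀ − z·I_n)⁻¹·f. Then for all z₁, z₂ ∈ ℂ such that Dᵀ − z₁·I_n and Dᵀ − z₂·I_n are invertible, (z₁ − z₂) · det(F·(Dᵀ − z₁·I_n)⁻¹·(Dᵀ − z₂·I_n)⁻¹·A·(B − z₁·I_N)·(B − z₂·I_N)·Cᵀ) = G(z₁)·H(z₂) − G(z₂)·H(z₁). -/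
/-!
Write `Rᵢ = (Dᵀ - zᵢ)⁻¹`. The rank-one relation gives `A (B - z) = (Dᵀ - z) A + f gᵀ`, so each
resolvent can be absorbed against one factor `B - zᵢ`, and `F R₁ R₂ A (B - z₁) (B - z₂) Cᵀ` is
`F A Cᵀ` plus a rank-two perturbation. The matrix determinant lemma turns its determinant into `τ`
times a `2 × 2` determinant in the scalars `gᵀ M Rᵢ f`, `gᵀ B M Rᵢ f` and their `R₁ R₂` analogues,
and the resolvent identity `R₁ - R₂ = (z₁ - z₂) R₁ R₂` eliminates the latter after multiplying by
`z₁ - z₂`.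
-/

open Matrix BigOperators

/-- The matrix `M = Cᵀ·(F·A·Cᵀ)⁻¹·F` of the Gekhtman–Kasman construction. -/
noncomputable def GKM {l n N : ℕ} (A : Matrix (Fin n) (Fin N) ℂ)
    (F : Matrix (Fin l) (Fin n) ℂ) (C : Matrix (Fin l) (Fin N) ℂ) :
    Matrix (Fin N) (Fin n) ℂ :=
  Cᵀ * (F * A * Cᵀ)⁻¹ * F

/-- `H(z) = τ·(1 + gᵀ·M·(Dᵀ − z·I_n)⁻¹·f)` where `τ = det(F·A·Cᵀ)`. -/
noncomputable def GKH {l n N : ℕ} (A : Matrix (Fin n) (Fin N) ℂ)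
    (D : Matrix (Fin n) (Fin n) ℂ) (f : Fin n → ℂ) (g : Fin N → ℂ)
    (F : Matrix (Fin l) (Fin n) ℂ) (C : Matrix (Fin l) (Fin N) ℂ) (z : ℂ) : ℂ :=
  (F * A * Cᵀ).det *
    (1 + g ⬝ᵥ (GKM A F C * (Dᵀ - z • (1 : Matrix (Fin n) (Fin n) ℂ))⁻¹) *ᵥ f)

/-- `G(z) = z + gᵀ·B·M·(Dᵀ − z·I_n)⁻¹·f`. -/
noncomputable def GKG {l n N : ℕ} (A : Matrix (Fin n) (Fin N) ℂ)
    (B : Matrix (Fin N) (Fin N) ℂ) (D : Matrix (Fin n) (Fin n) ℂ)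
    (f : Fin n → ℂ) (g : Fin N → ℂ)
    (F : Matrix (Fin l) (Fin n) ℂ) (C : Matrix (Fin l) (Fin N) ℂ) (z : ℂ) : ℂ :=
  z + g ⬝ᵥ (B * GKM A F C * (Dᵀ - z • (1 : Matrix (Fin n) (Fin n) ℂ))⁻¹) *ᵥ f

namespace Matrix

variable {R : Type*} {k l m n : Type*} [Fintype m] [Fintype n]

theorem vecMul_dotProduct_mulVec_mulVec [NonUnitalSemiring R] [Fintype k] [Fintype l]
    (g : k → R) (X : Matrix k l R) (Y : Matrix l m R) (Z : Matrix m n R) (f : n → R) :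
    (g ᵥ* X) ⬝ᵥ Y *ᵥ (Z *ᵥ f) = g ⬝ᵥ (X * Y * Z) *ᵥ f := by
  simp only [dotProduct_mulVec, vecMul_vecMul]

variable [CommRing R]

theorem det_add_vecMulVec_add_vecMulVec [DecidableEq m] {T : Matrix m m R} (hT : IsUnit T.det)
    (u₁ u₂ w₁ w₂ : m → R) :
    (T + vecMulVec u₁ w₁ + vecMulVec u₂ w₂).det =
      T.det * ((1 + w₁ ⬝ᵥ T⁻¹ *ᵥ u₁) * (1 + w₂ ⬝ᵥ T⁻¹ *ᵥ u₂)
        - (w₁ ⬝ᵥ T⁻¹ *ᵥ u₂) * (w₂ ⬝ᵥ T⁻¹ *ᵥ u₁)) := by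
  set P : Matrix m (Fin 2) R := of fun i j => ![u₁, u₂] j i
  set Q : Matrix (Fin 2) m R := of ![w₁, w₂]
  have hPQ : vecMulVec u₁ w₁ + vecMulVec u₂ w₂ = P * Q := by
    ext i j
    simp [P, Q, mul_apply, Fin.sum_univ_two, vecMulVec_apply]
  have hQP : ∀ i j, (Q * (T⁻¹ * P)) i j = ![w₁, w₂] i ⬝ᵥ T⁻¹ *ᵥ ![u₁, u₂] j := fun _ _ => rfl
  rw [add_assoc, hPQ, det_add_mul _ _ hT, Matrix.mul_assoc, det_fin_two]
  simp [hQP]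

theorem inv_sub_smul_one_sub_inv_sub_smul_one [DecidableEq n] (K : Matrix n n R) {z₁ z₂ : R}
    (h₁ : IsUnit (K - z₁ • 1)) (h₂ : IsUnit (K - z₂ • 1)) :
    (K - z₁ • 1)⁻¹ - (K - z₂ • 1)⁻¹ = (z₁ - z₂) • ((K - z₁ • 1)⁻¹ * (K - z₂ • 1)⁻¹) := by
  rw [inv_sub_inv (iff_of_true h₁ h₂), sub_sub_sub_cancel_left, ← sub_smul, Matrix.mul_smul,
    Matrix.mul_one, smul_mul]

section Intertwining

variable [DecidableEq m] [DecidableEq n] {A : Matrix n m R} {B : Matrix m m R} {K : Matrix n n R}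
  {f : n → R} {g : m → R}

theorem mul_sub_smul_one_of_mul_sub_mul_eq_vecMulVec (hAB : A * B - K * A = vecMulVec f g)
    (z : R) : A * (B - z • 1) = (K - z • 1) * A + vecMulVec f g := by
  rw [← hAB, Matrix.mul_sub, Matrix.sub_mul, Matrix.mul_smul, Matrix.smul_mul, Matrix.mul_one,
    Matrix.one_mul]
  abel

theorem inv_sub_smul_one_mul_mul_sub_smul_one (hAB : A * B - K * A = vecMulVec f g) {z : R}
    (hz : IsUnit (K - z • 1)) :
    (K - z • 1)⁻¹ * (A * (B - z • 1)) = A + vecMulVec ((K - z • 1)⁻¹ *ᵥ f) g := by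
  rw [mul_sub_smul_one_of_mul_sub_mul_eq_vecMulVec hAB, Matrix.mul_add,
    nonsing_inv_mul_cancel_left _ _ ((isUnit_iff_isUnit_det _).mp hz), mul_vecMulVec]

theorem inv_mul_inv_mul_mul_sub_smul_one_mul_sub_smul_one
    (hAB : A * B - K * A = vecMulVec f g) {z₁ z₂ : R}
    (h₁ : IsUnit (K - z₁ • 1)) (h₂ : IsUnit (K - z₂ • 1)) :
    (K - z₁ • 1)⁻¹ * (K - z₂ • 1)⁻¹ * (A * ((B - z₁ • 1) * (B - z₂ • 1)))
      = A + vecMulVec ((K - z₁ • 1)⁻¹ *ᵥ f) g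
        + vecMulVec (((K - z₁ • 1)⁻¹ * (K - z₂ • 1)⁻¹) *ᵥ f) (g ᵥ* (B - z₁ • 1)) := by
  have hcomm : (B - z₁ • 1) * (B - z₂ • 1) = (B - z₂ • 1) * (B - z₁ • 1) :=
    ((Commute.refl B).sub_right ((Commute.one_right B).smul_right _)).sub_left
      ((Commute.one_left _).smul_left _)
  rw [hcomm, ← Matrix.mul_assoc A, Matrix.mul_assoc, ← Matrix.mul_assoc _ (A * _),
    inv_sub_smul_one_mul_mul_sub_smul_one hAB h₂, Matrix.add_mul, Matrix.mul_add,
    inv_sub_smul_one_mul_mul_sub_smul_one hAB h₁, vecMulVec_mul, mul_vecMulVec, mulVec_mulVec]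

end Intertwining

end Matrix

/-- If `A·B − Dᵀ·A = f·gᵀ` and `τ = det(F·A·Cᵀ) ≠ 0`, then for all
`z₁, z₂` with `Dᵀ − zᵢ·I_n` invertible,
`(z₁ − z₂)·det(F·(Dᵀ−z₁I)⁻¹·(Dᵀ−z₂I)⁻¹·A·(B−z₁I)·(B−z₂I)·Cᵀ)
  = G(z₁)·H(z₂) − G(z₂)·H(z₁)`. -/
theorem stmt18 (l n N : ℕ) (A : Matrix (Fin n) (Fin N) ℂ)
    (B : Matrix (Fin N) (Fin N) ℂ) (D : Matrix (Fin n) (Fin n) ℂ)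
    (f : Fin n → ℂ) (g : Fin N → ℂ)
    (hrank : A * B - Dᵀ * A = Matrix.vecMulVec f g)
    (F : Matrix (Fin l) (Fin n) ℂ) (C : Matrix (Fin l) (Fin N) ℂ)
    (hτ : (F * A * Cᵀ).det ≠ 0)
    (z₁ z₂ : ℂ)
    (h₁ : IsUnit (Dᵀ - z₁ • (1 : Matrix (Fin n) (Fin n) ℂ)))
    (h₂ : IsUnit (Dᵀ - z₂ • (1 : Matrix (Fin n) (Fin n) ℂ))) :
    (z₁ - z₂) *
        (F * (Dᵀ - z₁ • (1 : Matrix (Fin n) (Fin n) ℂ))⁻¹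
          * (Dᵀ - z₂ • (1 : Matrix (Fin n) (Fin n) ℂ))⁻¹ * A
          * (B - z₁ • (1 : Matrix (Fin N) (Fin N) ℂ))
          * (B - z₂ • (1 : Matrix (Fin N) (Fin N) ℂ)) * Cᵀ).det
      = GKG A B D f g F C z₁ * GKH A D f g F C z₂
        - GKG A B D f g F C z₂ * GKH A D f g F C z₁ := by
  unfold GKG GKH
  set R₁ := (Dᵀ - z₁ • (1 : Matrix (Fin n) (Fin n) ℂ))⁻¹
  set R₂ := (Dᵀ - z₂ • (1 : Matrix (Fin n) (Fin n) ℂ))⁻¹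
  set M := GKM A F C
  have hX : F * R₁ * R₂ * A * (B - z₁ • 1) * (B - z₂ • 1) * Cᵀ
      = F * A * Cᵀ + vecMulVec ((F * R₁) *ᵥ f) (g ᵥ* Cᵀ)
        + vecMulVec ((F * (R₁ * R₂)) *ᵥ f) (g ᵥ* (B - z₁ • 1) ᵥ* Cᵀ) := by
    have := congrArg (F * · * Cᵀ)
      (inv_mul_inv_mul_mul_sub_smul_one_mul_sub_smul_one hrank h₁ h₂)
    simpa only [Matrix.mul_add, Matrix.add_mul, mul_vecMulVec, vecMulVec_mul, mulVec_mulVec,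
      Matrix.mul_assoc] using this
  have hM (Y : Matrix (Fin n) (Fin n) ℂ) :
      (g ᵥ* Cᵀ) ⬝ᵥ (F * A * Cᵀ)⁻¹ *ᵥ ((F * Y) *ᵥ f) = g ⬝ᵥ (M * Y) *ᵥ f := by
    simp only [vecMul_dotProduct_mulVec_mulVec, M, GKM, Matrix.mul_assoc]
  have hXM (X : Matrix (Fin N) (Fin N) ℂ) (Y : Matrix (Fin n) (Fin n) ℂ) :
      (g ᵥ* X ᵥ* Cᵀ) ⬝ᵥ (F * A * Cᵀ)⁻¹ *ᵥ ((F * Y) *ᵥ f) = g ⬝ᵥ (X * M * Y) *ᵥ f := by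
    simp only [vecMul_vecMul, vecMul_dotProduct_mulVec_mulVec, M, GKM, Matrix.mul_assoc]
  have hresolvent (Z : Matrix (Fin N) (Fin n) ℂ) : g ⬝ᵥ (Z * R₁) *ᵥ f - g ⬝ᵥ (Z * R₂) *ᵥ f
      = (z₁ - z₂) * g ⬝ᵥ (Z * (R₁ * R₂)) *ᵥ f := by
    rw [← dotProduct_sub, ← sub_mulVec, ← Matrix.mul_sub,
      inv_sub_smul_one_sub_inv_sub_smul_one _ h₁ h₂, Matrix.mul_smul, smul_mulVec,
      dotProduct_smul, smul_eq_mul]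
  rw [hX, det_add_vecMulVec_add_vecMulVec (isUnit_iff_ne_zero.mpr hτ), hM, hM, hXM, hXM]
  simp only [Matrix.sub_mul, Matrix.smul_mul, Matrix.one_mul, sub_mulVec, smul_mulVec,
    dotProduct_sub, dotProduct_smul, smul_eq_mul]
  linear_combination ((F * A * Cᵀ).det * (z₁ + g ⬝ᵥ (B * M * R₁) *ᵥ f)) * hresolvent M
    - ((F * A * Cᵀ).det * (1 + g ⬝ᵥ (M * R₁) *ᵥ f)) * hresolvent (B * M)
end
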